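/- arXiv:1802.00870 — 4 statements merged into one kernel-verified Lean document; each statement's English description precedes it below -/
import Mathlib

section
/- For any Borel set S ⊆ ℝⁿ, ε > 0 and x ≥ 1, λ((S)_{xε}) ≤ xⁿ · λ((S)_ε); and for 0 < x ≤ 1, λ((S)_{xε}) ≥ xⁿ · λ((S)_ε). -/
open MeasureTheory Metric Set
open scoped ENNReal RealInnerProductSpace

lemma sausage_scale_upper (n : ℕ) (S : Set (EuclideanSpace ℝ (Fin n)))
    (ε : ℝ) (hε : 0 < ε) (x : ℝ) (hx : 1 ≤ x) :
    volume (Metric.cthickening (x * ε) S) ≤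
      ENNReal.ofReal (x ^ n) * volume (Metric.cthickening ε S) := by
  classical
  rcases S.eq_empty_or_nonempty with rfl | hSne
  · simp
  have hx0 : (0:ℝ) < x := lt_of_lt_of_le one_pos hx
  set C : Set (EuclideanSpace ℝ (Fin n)) := closure S with hCdef
  have hCc : IsClosed C := isClosed_closure
  have hCne : C.Nonempty := hSne.closure
  have hproj : ∀ y : EuclideanSpace ℝ (Fin n), ∃ p ∈ C, Metric.infDist y C = dist y p :=
    fun y => hCc.exists_infDist_eq_dist hCne y
  choose s hsC hsd using hproj
  set A : Set (EuclideanSpace ℝ (Fin n)) := Metric.cthickening (x * ε) S with hAdef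
  set φ : EuclideanSpace ℝ (Fin n) → EuclideanSpace ℝ (Fin n) := fun y => s y + x⁻¹ • (y - s y) with hφdef
  -- monotonicity of nearest-point map
  have hip : ∀ y z : EuclideanSpace ℝ (Fin n), 0 ≤ ⟪y - z, s y - s z⟫ := by
    intro y z
    have h1 : dist y (s y) ≤ dist y (s z) := by
      rw [← hsd y]; exact Metric.infDist_le_dist_of_mem (hsC z)
    have h2 : dist z (s z) ≤ dist z (s y) := by
      rw [← hsd z]; exact Metric.infDist_le_dist_of_mem (hsC y)
    have h1' : ‖y - s y‖ ^ 2 ≤ ‖y - s z‖ ^ 2 := by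
      rw [dist_eq_norm, dist_eq_norm] at h1
      exact pow_le_pow_left₀ (norm_nonneg _) h1 2
    have h2' : ‖z - s z‖ ^ 2 ≤ ‖z - s y‖ ^ 2 := by
      rw [dist_eq_norm, dist_eq_norm] at h2
      exact pow_le_pow_left₀ (norm_nonneg _) h2 2
    have e1 := norm_sub_sq_real y (s y)
    have e2 := norm_sub_sq_real y (s z)
    have e3 := norm_sub_sq_real z (s z)
    have e4 := norm_sub_sq_real z (s y)
    have einner : ⟪y - z, s y - s z⟫ =
        ⟪y, s y⟫ - ⟪y, s z⟫ - ⟪z, s y⟫ + ⟪z, s z⟫ := by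
      simp [inner_sub_left, inner_sub_right]; ring
    rw [einner]
    linarith
  -- co-Lipschitz estimate
  have hco : ∀ y z : EuclideanSpace ℝ (Fin n), ‖y - z‖ ≤ x * ‖φ y - φ z‖ := by
    intro y z
    have hdiff : φ y - φ z = x⁻¹ • (y - z) + (1 - x⁻¹) • (s y - s z) := by
      simp only [hφdef]
      module
    have hcross : 0 ≤ ⟪x⁻¹ • (y - z), (1 - x⁻¹) • (s y - s z)⟫ := by
      rw [real_inner_smul_left, real_inner_smul_right]
      have h1 : (0:ℝ) ≤ x⁻¹ := by positivity
      have h2 : (0:ℝ) ≤ 1 - x⁻¹ := by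
        have : x⁻¹ ≤ 1 := inv_le_one_of_one_le₀ hx
        linarith
      exact mul_nonneg h1 (mul_nonneg h2 (hip y z))
    have hsq : ‖x⁻¹ • (y - z)‖ ^ 2 ≤ ‖φ y - φ z‖ ^ 2 := by
      rw [hdiff, norm_add_sq_real]
      nlinarith [sq_nonneg ‖(1 - x⁻¹) • (s y - s z)‖, hcross]
    have hle : ‖x⁻¹ • (y - z)‖ ≤ ‖φ y - φ z‖ := by
      nlinarith [norm_nonneg (x⁻¹ • (y - z)), norm_nonneg (φ y - φ z)]
    have : ‖x⁻¹ • (y - z)‖ = x⁻¹ * ‖y - z‖ := by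
      rw [norm_smul, Real.norm_eq_abs, abs_of_pos (by positivity)]
    rw [this] at hle
    calc ‖y - z‖ = x * (x⁻¹ * ‖y - z‖) := by field_simp
      _ ≤ x * ‖φ y - φ z‖ := by
          exact mul_le_mul_of_nonneg_left hle hx0.le
  -- φ maps A into the ε-cthickening
  have hmaps : ∀ y ∈ A, φ y ∈ Metric.cthickening ε S := by
    intro y hy
    rw [← Metric.cthickening_closure]
    have hyd : dist y (s y) ≤ x * ε := by
      rw [← hsd y]
      have h1 : Metric.infDist y C = Metric.infDist y S := Metric.infDist_closure
      have h2 : EMetric.infEdist y S ≤ ENNReal.ofReal (x * ε) :=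
        Metric.mem_cthickening_iff.1 hy
      rw [h1, Metric.infDist]
      calc (EMetric.infEdist y S).toReal ≤ (ENNReal.ofReal (x * ε)).toReal :=
            ENNReal.toReal_mono ENNReal.ofReal_ne_top h2
        _ = x * ε := ENNReal.toReal_ofReal (by positivity)
    have hd : dist (φ y) (s y) ≤ ε := by
      have : φ y - s y = x⁻¹ • (y - s y) := by simp [hφdef]
      rw [dist_eq_norm, this, norm_smul, Real.norm_eq_abs, abs_of_pos (by positivity : (0:ℝ) < x⁻¹)]
      rw [← dist_eq_norm] at *
      calc x⁻¹ * dist y (s y) ≤ x⁻¹ * (x * ε) := by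
            exact mul_le_mul_of_nonneg_left hyd (by positivity)
        _ = ε := by field_simp
    exact Metric.mem_cthickening_of_dist_le _ _ _ _ (hsC y) hd
  -- injectivity on A and the inverse map
  have hinj : Set.InjOn φ A := by
    intro y hy z hz h
    have := hco y z
    rw [h, sub_self, norm_zero, mul_zero] at this
    have : ‖y - z‖ = 0 := le_antisymm this (norm_nonneg _)
    rwa [norm_eq_zero, sub_eq_zero] at this
  set ψ : EuclideanSpace ℝ (Fin n) → EuclideanSpace ℝ (Fin n) := Function.invFunOn φ A with hψdef
  have hback : ∀ y ∈ A, ψ (φ y) = y := fun y hy => hinj.leftInvOn_invFunOn hy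
  have himg : ψ '' (φ '' A) = A := hinj.leftInvOn_invFunOn.image_image
  -- ψ is x-Lipschitz on φ '' A
  have hLip : LipschitzOnWith x.toNNReal ψ (φ '' A) := by
    rw [lipschitzOnWith_iff_dist_le_mul]
    rintro t1 ⟨y, hy, rfl⟩ t2 ⟨z, hz, rfl⟩
    rw [hback y hy, hback z hz, dist_eq_norm, dist_eq_norm]
    calc ‖y - z‖ ≤ x * ‖φ y - φ z‖ := hco y z
      _ = ↑x.toNNReal * ‖φ y - φ z‖ := by rw [Real.coe_toNNReal x hx0.le]
  -- Hausdorff measure estimate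
  have hH : μH[(n:ℝ)] A ≤ (x.toNNReal : ℝ≥0∞) ^ (n:ℝ) * μH[(n:ℝ)] (Metric.cthickening ε S) := by
    calc μH[(n:ℝ)] A = μH[(n:ℝ)] (ψ '' (φ '' A)) := by rw [himg]
      _ ≤ (x.toNNReal : ℝ≥0∞) ^ (n:ℝ) * μH[(n:ℝ)] (φ '' A) :=
          hLip.hausdorffMeasure_image_le (by positivity)
      _ ≤ (x.toNNReal : ℝ≥0∞) ^ (n:ℝ) * μH[(n:ℝ)] (Metric.cthickening ε S) := by
          gcongr
          exact Set.image_subset_iff.2 hmaps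
  -- relate Hausdorff measure to volume by Haar uniqueness
  have hnr : ((Module.finrank ℝ (EuclideanSpace ℝ (Fin n)) : ℝ)) = (n : ℝ) := by
    simp [finrank_euclideanSpace_fin]
  haveI hinst : (μH[(n:ℝ)] : Measure (EuclideanSpace ℝ (Fin n))).IsAddHaarMeasure := by
    rw [← hnr]; exact isAddHaarMeasure_hausdorffMeasure
  set c := Measure.addHaarScalarFactor (μH[(n:ℝ)] : Measure (EuclideanSpace ℝ (Fin n))) volume with hcdef
  have hc : (μH[(n:ℝ)] : Measure (EuclideanSpace ℝ (Fin n))) = c • volume :=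
    Measure.isAddLeftInvariant_eq_smul _ _
  have hcpos : 0 < c := Measure.addHaarScalarFactor_pos_of_isAddHaarMeasure _ _
  have hKn : (x.toNNReal : ℝ≥0∞) ^ (n:ℝ) = ENNReal.ofReal (x ^ n) := by
    rw [ENNReal.rpow_natCast, ENNReal.ofReal_pow hx0.le]
    rfl
  rw [hc, hKn] at hH
  simp only [Measure.smul_apply, ENNReal.smul_def, smul_eq_mul] at hH
  rw [← mul_assoc, mul_comm (ENNReal.ofReal (x ^ n)) (c : ℝ≥0∞), mul_assoc] at hH
  have : volume A ≤ ENNReal.ofReal (x ^ n) * volume (Metric.cthickening ε S) :=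
    (ENNReal.mul_le_mul_iff_right (by exact_mod_cast hcpos.ne') ENNReal.coe_ne_top).1 hH
  exact this

/-- For a Borel set `S ⊆ ℝⁿ` and `ε > 0`: if `x ≥ 1` then
`λ(S_{xε}) ≤ xⁿ λ(S_ε)`, and if `0 < x ≤ 1` then `λ(S_{xε}) ≥ xⁿ λ(S_ε)`. -/
theorem volume_sausage_scale_bounds (n : ℕ) (S : Set (EuclideanSpace ℝ (Fin n)))
    (hS : MeasurableSet S) (ε : ℝ) (hε : 0 < ε) (x : ℝ) :
    (1 ≤ x → volume (Metric.cthickening (x * ε) S) ≤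
        ENNReal.ofReal (x ^ n) * volume (Metric.cthickening ε S)) ∧
    (0 < x → x ≤ 1 → ENNReal.ofReal (x ^ n) * volume (Metric.cthickening ε S) ≤
        volume (Metric.cthickening (x * ε) S)) := by
  constructor
  · intro hx
    exact sausage_scale_upper n S ε hε x hx
  · intro hx0 hx1
    have h := sausage_scale_upper n S (x * ε) (by positivity) x⁻¹
      ((one_le_inv₀ hx0).2 hx1)
    rw [show x⁻¹ * (x * ε) = ε by field_simp] at h
    calc ENNReal.ofReal (x ^ n) * volume (Metric.cthickening ε S)
        ≤ ENNReal.ofReal (x ^ n) *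
            (ENNReal.ofReal (x⁻¹ ^ n) * volume (Metric.cthickening (x * ε) S)) := by
          exact mul_le_mul_right h _
      _ = volume (Metric.cthickening (x * ε) S) := by
          rw [← mul_assoc, ← ENNReal.ofReal_mul (by positivity), ← mul_pow,
            mul_inv_cancel₀ hx0.ne', one_pow, ENNReal.ofReal_one, one_mul]
end

section
/- For every α > 0 there exists a constant M ≥ 1 such that for every sufficiently small ε > 0 there exist natural numbers m₁ and m₂ satisfying: (m₁+1)^{-α} − (m₁+2)^{-α} < 2ε ≤ m₁^{-α} − (m₁+1)^{-α}, (m₁+1)^{-α} ≤ 2 m₂ ε ≤ m₁^{-α}, and M⁻¹ ε^{-1/(1+α)} ≤ m_i ≤ M ε^{-1/(1+α)} for i = 1, 2. -/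
open Real

lemma mvt_rpow (α : ℝ) (hα : 0 < α) (x : ℝ) (hx : 0 < x) :
    α * (x+1) ^ (-α-1) ≤ x ^ (-α) - (x+1) ^ (-α) ∧
    x ^ (-α) - (x+1) ^ (-α) ≤ α * x ^ (-α-1) := by
  obtain ⟨c, hc, hc'⟩ := exists_hasDerivAt_eq_slope (fun t : ℝ => t ^ (-α))
      (fun t : ℝ => (-α) * t ^ (-α-1)) (by linarith : x < x+1)
      (by
        apply ContinuousOn.rpow_const continuousOn_id
        intro t ht
        exact Or.inl (by simp only [id_eq]; exact ne_of_gt (lt_of_lt_of_le hx ht.1)))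
      (by
        intro t ht
        exact Real.hasDerivAt_rpow_const (Or.inl (ne_of_gt (lt_trans hx ht.1))))
  have hcx : 0 < c := lt_trans hx hc.1
  have heq : x ^ (-α) - (x+1) ^ (-α) = α * c ^ (-α-1) := by
    have h1 : (x + 1 - x : ℝ) = 1 := by ring
    rw [h1, div_one] at hc'
    linarith [hc']
  have hz : (-α-1 : ℝ) ≤ 0 := by linarith
  constructor
  · rw [heq]
    have := Real.rpow_le_rpow_of_nonpos hcx (le_of_lt hc.2) hz
    nlinarith
  · rw [heq]
    have := Real.rpow_le_rpow_of_nonpos hx (le_of_lt hc.1) hz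
    nlinarith

set_option maxHeartbeats 1000000 in
/-- **Existence of the tail/core cut-offs `m₁(ε)` and `m₂(ε)`.** For every
`α > 0` there is `M ≥ 1` such that for every sufficiently small `ε > 0` there
are naturals `m₁, m₂` with
`(m₁+1)^{-α} − (m₁+2)^{-α} < 2ε ≤ m₁^{-α} − (m₁+1)^{-α}`,
`(m₁+1)^{-α} ≤ 2 m₂ ε ≤ m₁^{-α}`, and `m₁ ∼ m₂ ∼ ε^{-1/(1+α)}` with constant `M`. -/
theorem exists_m1_m2 (α : ℝ) (hα : 0 < α) :
    ∃ M : ℝ, 1 ≤ M ∧ ∃ ε₀ : ℝ, 0 < ε₀ ∧ ∀ ε : ℝ, 0 < ε → ε ≤ ε₀ →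
      ∃ m₁ m₂ : ℕ,
        ((m₁ : ℝ) + 1) ^ (-α) - ((m₁ : ℝ) + 2) ^ (-α) < 2 * ε ∧
        2 * ε ≤ (m₁ : ℝ) ^ (-α) - ((m₁ : ℝ) + 1) ^ (-α) ∧
        ((m₁ : ℝ) + 1) ^ (-α) ≤ 2 * (m₂ : ℝ) * ε ∧
        2 * (m₂ : ℝ) * ε ≤ (m₁ : ℝ) ^ (-α) ∧
        M⁻¹ * ε ^ (-1 / (1 + α)) ≤ (m₁ : ℝ) ∧ (m₁ : ℝ) ≤ M * ε ^ (-1 / (1 + α)) ∧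
        M⁻¹ * ε ^ (-1 / (1 + α)) ≤ (m₂ : ℝ) ∧ (m₂ : ℝ) ≤ M * ε ^ (-1 / (1 + α)) := by
  have h1α : (0:ℝ) < 1 + α := by linarith
  obtain ⟨β, hβdef⟩ : ∃ b : ℝ, b = 1/(1+α) := ⟨_, rfl⟩
  have hβpos : 0 < β := by rw [hβdef]; positivity
  have hβ1 : (1+α) * β = 1 := by rw [hβdef]; field_simp
  obtain ⟨c, hcdef⟩ : ∃ cc : ℝ, cc = (α/2) ^ β := ⟨_, rfl⟩
  have hc : 0 < c := by rw [hcdef]; exact Real.rpow_pos_of_pos (by linarith) _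
  have hcα : 0 < (c+1) ^ α := Real.rpow_pos_of_pos (by linarith) _
  have hc2α : 0 < (c/2) ^ (-α) := Real.rpow_pos_of_pos (by positivity) _
  obtain ⟨M, hMdef⟩ : ∃ m : ℝ, m = 1 + 2/c + c + 2*(c+1)^α + (c/2)^(-α) := ⟨_, rfl⟩
  have hM1 : 1 ≤ M := by
    have h0 : 0 ≤ 2/c := by positivity
    rw [hMdef]; linarith only [h0, hc, hcα, hc2α]
  have hMpos : 0 < M := by linarith
  refine ⟨M, hM1, min ((1 - (2:ℝ)^(-α))/2) (min 1 ((c/4)^(1+α))), ?_, ?_⟩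
  · have h2α : (2:ℝ)^(-α) < 1 :=
      Real.rpow_lt_one_of_one_lt_of_neg (by norm_num) (by linarith)
    have hp : (0:ℝ) < (c/4)^(1+α) := Real.rpow_pos_of_pos (by positivity) _
    exact lt_min (by linarith) (lt_min one_pos hp)
  intro ε hε hεle
  have hε1 : 2*ε ≤ 1 - (2:ℝ)^(-α) := by
    have := le_trans hεle (min_le_left _ _); linarith
  have hε2 : ε ≤ 1 := le_trans hεle (le_trans (min_le_right _ _) (min_le_left _ _))
  have hε3 : ε ≤ (c/4)^(1+α) := le_trans hεle (le_trans (min_le_right _ _) (min_le_right _ _))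
  obtain ⟨E, hEdef⟩ : ∃ e : ℝ, e = ε ^ (-β) := ⟨_, rfl⟩
  have hEpos : 0 < E := by rw [hEdef]; exact Real.rpow_pos_of_pos hε _
  have hexpeq : (-1 / (1 + α) : ℝ) = -β := by rw [hβdef]; ring
  have hE1 : 1 ≤ E := by
    rw [hEdef]
    exact Real.one_le_rpow_of_pos_of_le_one_of_nonpos hε hε2 (by linarith)
  have hE4 : 4/c ≤ E := by
    have h1 : ((c/4)^(1+α) : ℝ) ^ (-β) ≤ ε ^ (-β) :=
      Real.rpow_le_rpow_of_nonpos hε hε3 (by linarith)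
    have h2 : ((c/4)^(1+α) : ℝ) ^ (-β) = (c/4) ^ ((1+α) * (-β)) := by
      rw [← Real.rpow_mul (by positivity)]
    have h3 : ((1+α) * (-β) : ℝ) = -1 := by rw [hβdef]; field_simp
    have h4 : (c/4 : ℝ) ^ (-1 : ℝ) = 4/c := by
      rw [Real.rpow_neg (by positivity), Real.rpow_one, inv_div]
    rw [h2, h3, h4] at h1
    rw [hEdef]
    exact h1
  have hkey : ε ^ (β*α) * ε⁻¹ = E := by
    have hexp : β*α + (-1) = -β := by rw [hβdef]; field_simp; ring
    rw [hEdef, ← hexp, Real.rpow_add hε, Real.rpow_neg_one]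
  -- choose m₁
  have hPex : ∃ n : ℕ, ((n : ℝ) + 1) ^ (-α) - ((n : ℝ) + 2) ^ (-α) < 2 * ε := by
    obtain ⟨n, hn⟩ := exists_nat_gt ((2*ε)⁻¹ ^ (1/α))
    refine ⟨n, ?_⟩
    have hb : (0:ℝ) ≤ (2*ε)⁻¹ ^ (1/α) := Real.rpow_nonneg (by positivity) _
    have hn1 : (2*ε)⁻¹ ^ (1/α) < (n:ℝ) + 1 := by linarith
    have h2 : ((2*ε)⁻¹ ^ (1/α)) ^ α < ((n:ℝ)+1) ^ α :=
      Real.rpow_lt_rpow hb hn1 hα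
    rw [← Real.rpow_mul (by positivity), one_div, inv_mul_cancel₀ (ne_of_gt hα),
      Real.rpow_one] at h2
    have hs : (0:ℝ) < ((n:ℝ)+1) ^ α := Real.rpow_pos_of_pos (by positivity) _
    have h3 : ((n:ℝ)+1) ^ (-α) < 2*ε := by
      rw [Real.rpow_neg (by positivity)]
      have := inv_strictAnti₀ (by positivity : (0:ℝ) < (2*ε)⁻¹) h2
      rwa [inv_inv] at this
    have h4 : (0:ℝ) ≤ ((n:ℝ)+2) ^ (-α) := Real.rpow_nonneg (by positivity) _
    linarith
  obtain ⟨m₁, hm₁def⟩ : ∃ m : ℕ, m = Nat.find hPex := ⟨_, rfl⟩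
  have hfind : ((m₁ : ℝ) + 1) ^ (-α) - ((m₁ : ℝ) + 2) ^ (-α) < 2 * ε := by
    rw [hm₁def]; exact Nat.find_spec hPex
  have hm₁ne : m₁ ≠ 0 := by
    intro h
    rw [h] at hfind
    norm_num at hfind
    linarith
  obtain ⟨k, hk⟩ := Nat.exists_eq_succ_of_ne_zero hm₁ne
  have hfind2 : 2 * ε ≤ (m₁ : ℝ) ^ (-α) - ((m₁ : ℝ) + 1) ^ (-α) := by
    have hmin : ¬ (((k : ℝ) + 1) ^ (-α) - ((k : ℝ) + 2) ^ (-α) < 2 * ε) :=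
      Nat.find_min hPex (by omega)
    push_neg at hmin
    have h1 : ((m₁:ℝ)) = (k:ℝ) + 1 := by rw [hk]; push_cast; ring
    rw [h1]
    have h3 : ((k:ℝ)+1+1) = (k:ℝ)+2 := by ring
    rw [h3]
    exact hmin
  have hm1pos : (0:ℝ) < m₁ := by exact_mod_cast Nat.pos_of_ne_zero hm₁ne
  clear hm₁def hPex hm₁ne hk
  -- upper bound on m₁
  have hup1 : (m₁:ℝ) ≤ c * E := by
    have hmvt := (mvt_rpow α hα (m₁:ℝ) hm1pos).2
    have h5 : 2*ε ≤ α * (m₁:ℝ) ^ (-α-1) := le_trans hfind2 hmvt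
    have hs : (0:ℝ) < (m₁:ℝ) ^ (1+α) := Real.rpow_pos_of_pos hm1pos _
    have he : ((m₁:ℝ)) ^ (-α-1) = ((m₁:ℝ) ^ (1+α))⁻¹ := by
      rw [← Real.rpow_neg (le_of_lt hm1pos)]; congr 1; ring
    rw [he, ← div_eq_mul_inv, le_div_iff₀ hs] at h5
    have h6 : (m₁:ℝ) ^ (1+α) ≤ α/(2*ε) := by
      rw [le_div_iff₀ (by positivity)]; nlinarith
    have h7 := Real.rpow_le_rpow (le_of_lt hs) h6 (le_of_lt hβpos)
    rw [← Real.rpow_mul (le_of_lt hm1pos) (1+α) β, hβ1, Real.rpow_one] at h7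
    have h8 : (α/(2*ε)) ^ β = c * E := by
      have h9 : α/(2*ε) = (α/2) * ε⁻¹ := by field_simp
      rw [h9, Real.mul_rpow (by positivity) (by positivity), ← hcdef,
        Real.inv_rpow (le_of_lt hε), ← Real.rpow_neg (le_of_lt hε), ← hEdef]
    rw [h8] at h7
    exact h7
  -- lower bound on m₁
  have hlow1 : (c/2) * E ≤ (m₁:ℝ) := by
    have hmvt := (mvt_rpow α hα ((m₁:ℝ)+1) (by linarith)).1
    have h5 : α * ((m₁:ℝ)+2) ^ (-α-1) < 2*ε := by
      have h55 : ((m₁:ℝ)+1+1) = (m₁:ℝ)+2 := by ring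
      rw [h55] at hmvt
      linarith
    have hs : (0:ℝ) < ((m₁:ℝ)+2) ^ (1+α) := Real.rpow_pos_of_pos (by linarith) _
    have he : ((m₁:ℝ)+2) ^ (-α-1) = (((m₁:ℝ)+2) ^ (1+α))⁻¹ := by
      rw [← Real.rpow_neg (by linarith)]; congr 1; ring
    rw [he, ← div_eq_mul_inv, div_lt_iff₀ hs] at h5
    have h6 : α/(2*ε) < ((m₁:ℝ)+2) ^ (1+α) := by
      rw [div_lt_iff₀ (by positivity)]; nlinarith
    have h7 := Real.rpow_lt_rpow (by positivity) h6 hβpos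
    rw [← Real.rpow_mul (by linarith) (1+α) β, hβ1, Real.rpow_one] at h7
    have h8 : (α/(2*ε)) ^ β = c * E := by
      have h9 : α/(2*ε) = (α/2) * ε⁻¹ := by field_simp
      rw [h9, Real.mul_rpow (by positivity) (by positivity), ← hcdef,
        Real.inv_rpow (le_of_lt hε), ← Real.rpow_neg (le_of_lt hε), ← hEdef]
    rw [h8] at h7
    have h9 : 2 ≤ (c/2) * E := by
      have h99 : (c/2) * (4/c) = 2 := by field_simp; ring
      nlinarith
    nlinarith
  -- define m₂
  obtain ⟨q, hqdef⟩ : ∃ qq : ℝ, qq = ((m₁:ℝ)+1) ^ (-α) / (2*ε) := ⟨_, rfl⟩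
  have hq0 : 0 ≤ q := by
    rw [hqdef]
    exact div_nonneg (Real.rpow_nonneg (by positivity) _) (by positivity)
  have hqm : q ≤ (⌈q⌉₊:ℝ) := Nat.le_ceil q
  have hqm' : (⌈q⌉₊:ℝ) < q + 1 := Nat.ceil_lt_add_one hq0
  have hq2 : 2*q*ε = ((m₁:ℝ)+1) ^ (-α) := by rw [hqdef]; field_simp
  have hg1 : ((m₁:ℝ)+1) ^ (-α) ≤ 2 * (⌈q⌉₊:ℝ) * ε := by
    nlinarith [mul_nonneg (sub_nonneg.mpr hqm) hε.le]
  have hg2 : 2 * (⌈q⌉₊:ℝ) * ε ≤ (m₁:ℝ) ^ (-α) := by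
    nlinarith [mul_pos (sub_pos.mpr hqm') hε]
  -- m₁ lower
  have hB1 : M⁻¹ * E ≤ (m₁:ℝ) := by
    have h1 : 2/c ≤ M := by rw [hMdef]; linarith only [hc, hcα, hc2α]
    have h2 : M⁻¹ ≤ c/2 := by
      have h3 := inv_anti₀ (by positivity : (0:ℝ) < 2/c) h1
      rwa [inv_div] at h3
    have h4 : M⁻¹ * E ≤ (c/2) * E := mul_le_mul_of_nonneg_right h2 hEpos.le
    calc M⁻¹ * E ≤ (c/2) * E := h4
      _ = c/2 * E := by ring
      _ ≤ (m₁:ℝ) := hlow1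
  -- m₁ upper
  have hB2 : (m₁:ℝ) ≤ M * E := by
    have h1 : c ≤ M := by
      have h0 : 0 ≤ 2/c := by positivity
      rw [hMdef]; linarith only [h0, hc, hcα, hc2α]
    exact le_trans hup1 (mul_le_mul_of_nonneg_right h1 hEpos.le)
  -- m₂ lower
  have hB3 : M⁻¹ * E ≤ (⌈q⌉₊:ℝ) := by
    have hb1 : (m₁:ℝ) + 1 ≤ (c+1)*E := by nlinarith
    have hb2 : ((c+1)*E) ^ (-α) ≤ ((m₁:ℝ)+1) ^ (-α) :=
      Real.rpow_le_rpow_of_nonpos (by linarith) hb1 (by linarith)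
    have hb3 : ((c+1)*E) ^ (-α) = (c+1)^(-α) * ε ^ (β*α) := by
      rw [Real.mul_rpow (by linarith) (le_of_lt hEpos), hEdef,
        ← Real.rpow_mul (le_of_lt hε)]
      have he2 : (-β)*(-α) = β*α := by ring
      rw [he2]
    have hb4 : (c+1)^(-α)/2 * E ≤ q := by
      rw [hqdef, le_div_iff₀ (by positivity)]
      have heq2 : (c+1)^(-α)/2 * E * (2*ε) = (c+1)^(-α) * ε ^ (β*α) := by
        rw [← hkey]; field_simp
      rw [heq2, ← hb3]
      exact hb2
    have hb5 : 2*(c+1)^α ≤ M := by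
      have h0 : 0 ≤ 2/c := by positivity
      rw [hMdef]; linarith only [h0, hc, hcα, hc2α]
    have hb6 : M⁻¹ ≤ (c+1)^(-α)/2 := by
      have h7 := inv_anti₀ (by positivity : (0:ℝ) < 2*(c+1)^α) hb5
      rw [Real.rpow_neg (by linarith : (0:ℝ) ≤ c+1)]
      rw [mul_inv] at h7
      linarith
    calc M⁻¹ * E ≤ (c+1)^(-α)/2 * E := mul_le_mul_of_nonneg_right hb6 hEpos.le
      _ ≤ q := hb4
      _ ≤ (⌈q⌉₊:ℝ) := hqm
  -- m₂ upper
  have hB4 : (⌈q⌉₊:ℝ) ≤ M * E := by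
    have hb1 : (0:ℝ) < (c/2)*E := by positivity
    have hb2 : (m₁:ℝ) ^ (-α) ≤ ((c/2)*E) ^ (-α) :=
      Real.rpow_le_rpow_of_nonpos hb1 hlow1 (by linarith)
    have hb3 : ((c/2)*E) ^ (-α) = (c/2)^(-α) * ε ^ (β*α) := by
      rw [Real.mul_rpow (by positivity) (le_of_lt hEpos), hEdef,
        ← Real.rpow_mul (le_of_lt hε)]
      have he2 : (-β)*(-α) = β*α := by ring
      rw [he2]
    have hb4 : (c/2)^(-α) * ε ^ (β*α) = (c/2)^(-α)/2 * E * (2*ε) := by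
      rw [← hkey]; field_simp
    have h6 : (⌈q⌉₊:ℝ) * (2*ε) ≤ ((c/2)^(-α)/2 * E) * (2*ε) := by
      have h60 : (m₁:ℝ)^(-α) ≤ (c/2)^(-α)/2 * E * (2*ε) := by
        rw [← hb4, ← hb3]; exact hb2
      have h61 : (⌈q⌉₊:ℝ) * (2*ε) = 2*(⌈q⌉₊:ℝ)*ε := by ring
      rw [h61]
      exact le_trans hg2 h60
    have h7 : (⌈q⌉₊:ℝ) ≤ (c/2)^(-α)/2 * E :=
      (mul_le_mul_iff_of_pos_right (by positivity : (0:ℝ) < 2*ε)).mp h6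
    have hb5 : (c/2)^(-α)/2 ≤ M := by
      have h0 : 0 ≤ 2/c := by positivity
      rw [hMdef]; linarith only [h0, hc, hcα, hc2α]
    exact le_trans h7 (mul_le_mul_of_nonneg_right hb5 hEpos.le)
  refine ⟨m₁, ⌈q⌉₊, hfind, hfind2, hg1, hg2, ?_, ?_, ?_, ?_⟩
  · rw [hexpeq, ← hEdef]; exact hB1
  · rw [hexpeq, ← hEdef]; exact hB2
  · rw [hexpeq, ← hEdef]; exact hB3
  · rw [hexpeq, ← hEdef]; exact hB4
end

section
/- Let S ⊆ S^{n-1} ⊆ ℝⁿ be Minkowski non-degenerate of box dimension δ ≥ 0 (i.e. λ((S)_ε) ∼ ε^{n-δ} as ε → 0). If αδ < 1, then the centre-type fractal nest F_α S = ⋃_{k≥1} (k^{-α})S is Minkowski non-degenerate of box dimension (δ+1)/(α+1): there exists M ≥ 1 with M⁻¹ ε^{n-(δ+1)/(α+1)} ≤ λ((F_α S)_ε) ≤ M ε^{n-(δ+1)/(α+1)} for all sufficiently small ε > 0. -/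
set_option maxHeartbeats 1000000
open MeasureTheory Pointwise Metric Set


/-- points in cthickening of a subset of a sphere have norm close to the radius -/
lemma norm_mem_cthick_sphere {n : ℕ} {A : Set (EuclideanSpace ℝ (Fin n))} {t ε : ℝ}
    (hA : A ⊆ sphere 0 t) (hε : 0 ≤ ε) {x : EuclideanSpace ℝ (Fin n)}
    (hx : x ∈ cthickening ε A) : |‖x‖ - t| ≤ ε := by
  refine le_of_forall_pos_le_add fun η hη => ?_
  have h2 : x ∈ thickening (ε + η) A :=
    cthickening_subset_thickening' (by linarith) (by linarith) A hx
  obtain ⟨y, hyA, hxy⟩ := mem_thickening_iff.1 h2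
  have hyn : ‖y‖ = t := by simpa [mem_sphere_iff_norm] using hA hyA
  calc |‖x‖ - t| = |‖x‖ - ‖y‖| := by rw [hyn]
    _ ≤ dist x y := abs_norm_sub_norm_le x y
    _ ≤ ε + η := hxy.le

/-- AM-GM consequence: `x^θ ≤ (1-θ) + θ x` for `x ≥ 0`, `0 ≤ θ ≤ 1`. -/
lemma rpow_le_one_sub_add {x θ : ℝ} (hx : 0 ≤ x) (h0 : 0 ≤ θ) (h1 : θ ≤ 1) :
    x ^ θ ≤ (1 - θ) + θ * x := by
  have := Real.geom_mean_le_arith_mean2_weighted h0 (by linarith : (0:ℝ) ≤ 1 - θ)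
    hx zero_le_one (by ring)
  rw [Real.one_rpow] at this
  linarith [this]

/-- telescoping bound: `∑_{k<K} (k+1)^{-β} ≤ (1-β)⁻¹ K^{1-β}` for `0 ≤ β < 1`. -/
lemma sum_rpow_neg_le {β : ℝ} (hβ0 : 0 ≤ β) (hβ1 : β < 1) (K : ℕ) :
    ∑ k ∈ Finset.range K, ((k : ℝ) + 1) ^ (-β) ≤ (1 - β)⁻¹ * (K : ℝ) ^ (1 - β) := by
  have hθ : 0 < 1 - β := by linarith
  induction K with
  | zero => simp [Real.zero_rpow hθ.ne']
  | succ K ih =>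
      rw [Finset.sum_range_succ]
      have ha : (0:ℝ) < (K : ℝ) + 1 := by positivity
      -- key step : ((K:ℝ)+1)^(-β) ≤ (1-β)⁻¹ * (((K:ℝ)+1)^(1-β) - (K:ℝ)^(1-β))
      have key : (1 - β) * ((K:ℝ) + 1) ^ (-β) ≤ ((K:ℝ)+1) ^ (1-β) - (K:ℝ) ^ (1-β) := by
        have hx : (K:ℝ) = ((K:ℝ)+1) * ((K:ℝ)/((K:ℝ)+1)) := by field_simp
        have hxr : (0:ℝ) ≤ (K:ℝ)/((K:ℝ)+1) := by positivity
        have h2 : ((K:ℝ)) ^ (1-β) = ((K:ℝ)+1) ^ (1-β) * ((K:ℝ)/((K:ℝ)+1)) ^ (1-β) := by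
          rw [← Real.mul_rpow ha.le hxr, ← hx]
        have h3 : ((K:ℝ)/((K:ℝ)+1)) ^ (1-β) ≤ (1 - (1-β)) + (1-β) * ((K:ℝ)/((K:ℝ)+1)) :=
          rpow_le_one_sub_add hxr hθ.le (by linarith)
        have h4 : ((K:ℝ)) ^ (1-β) ≤ ((K:ℝ)+1) ^ (1-β) * (β + (1-β) * ((K:ℝ)/((K:ℝ)+1))) := by
          rw [h2]
          have := mul_le_mul_of_nonneg_left h3 (Real.rpow_nonneg ha.le (1-β))
          simpa using this
        have h5 : ((K:ℝ)+1) ^ (1-β) * (β + (1-β) * ((K:ℝ)/((K:ℝ)+1)))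
            = ((K:ℝ)+1) ^ (1-β) - (1-β) * (((K:ℝ)+1) ^ (1-β) / ((K:ℝ)+1)) := by
          field_simp
          ring
        have h6 : ((K:ℝ)+1) ^ (1-β) / ((K:ℝ)+1) = ((K:ℝ)+1) ^ (-β) := by
          have h7 := Real.rpow_sub ha (1-β) 1
          rw [Real.rpow_one] at h7
          rw [← h7]
          norm_num
        nlinarith [h4, h5, h6]
      have key2 : ((K:ℝ) + 1) ^ (-β) ≤ (1-β)⁻¹ * (((K:ℝ)+1) ^ (1-β) - (K:ℝ) ^ (1-β)) := by
        rw [le_inv_mul_iff₀ hθ]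
        linarith [key]
      push_cast
      linarith [ih, key2]


/-- gap estimate : `α b^{-(α+1)} ≤ (b-1)^{-α} - b^{-α}` for `b ≥ 2`. -/
lemma gap_lower {α : ℝ} (hα : 0 < α) {b : ℝ} (hb : 2 ≤ b) :
    α * b ^ (-(α+1)) ≤ (b-1) ^ (-α) - b ^ (-α) := by
  have hb0 : (0:ℝ) < b := by linarith
  have hb1 : (0:ℝ) < b - 1 := by linarith
  have hinv : (0:ℝ) < 1/b := by positivity
  have hie : 0 ≤ 1 - 1/b := by
    have : 1/b ≤ 1 := by rw [div_le_one hb0]; linarith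
    linarith
  -- key : (b+α) * (b-1)^α ≤ b^(α+1)
  have e1 : (1 - 1/b) ≤ Real.exp (-(1/b)) := by
    have := Real.add_one_le_exp (-(1/b)); linarith
  have e2 : (1 - 1/b) ^ α ≤ Real.exp (-(1/b)) ^ α := Real.rpow_le_rpow hie e1 hα.le
  have e3 : Real.exp (-(1/b)) ^ α = Real.exp (-(α/b)) := by
    rw [← Real.exp_mul]; ring_nf
  have e4 : 1 + α/b ≤ Real.exp (α/b) := by
    have := Real.add_one_le_exp (α/b); linarith
  have hsplit : b - 1 = b * (1 - 1/b) := by field_simp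
  have key : (b + α) * (b-1) ^ α ≤ b ^ (α+1) := by
    have h1 : (b-1) ^ α = b ^ α * (1 - 1/b) ^ α := by
      rw [hsplit, Real.mul_rpow hb0.le hie]
    have h2 : b ^ (α+1) = b ^ α * b := Real.rpow_add_one hb0.ne' α
    have hbp : (0:ℝ) < b ^ α := Real.rpow_pos_of_pos hb0 α
    calc (b + α) * (b-1) ^ α = (b * (1 + α/b)) * (b ^ α * (1 - 1/b) ^ α) := by
          rw [h1]; field_simp
      _ ≤ (b * Real.exp (α/b)) * (b ^ α * Real.exp (-(α/b))) := by
          apply mul_le_mul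
          · exact mul_le_mul_of_nonneg_left e4 hb0.le
          · exact mul_le_mul_of_nonneg_left (e2.trans_eq e3) hbp.le
          · positivity
          · positivity
      _ = b ^ α * b * (Real.exp (α/b) * Real.exp (-(α/b))) := by ring
      _ = b ^ (α+1) := by rw [← Real.exp_add, add_neg_cancel, Real.exp_zero, mul_one, h2]
  -- convert to the desired form
  have hP : (0:ℝ) < b ^ α := Real.rpow_pos_of_pos hb0 α
  have hQ : (0:ℝ) < (b-1) ^ α := Real.rpow_pos_of_pos hb1 α
  have r1 : (b-1) ^ (-α) = ((b-1) ^ α)⁻¹ := by rw [Real.rpow_neg hb1.le]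
  have r2 : b ^ (-α) = (b ^ α)⁻¹ := by rw [Real.rpow_neg hb0.le]
  have r3 : b ^ (-(α+1)) = (b ^ α * b)⁻¹ := by
    rw [Real.rpow_neg hb0.le, Real.rpow_add_one hb0.ne']
  have h2 : b ^ (α+1) = b ^ α * b := Real.rpow_add_one hb0.ne' α
  rw [r1, r2, r3]
  rw [h2] at key
  rw [← sub_nonneg]
  have expand : ((b-1) ^ α)⁻¹ - (b ^ α)⁻¹ - α * (b ^ α * b)⁻¹
      = (b ^ α * b - (b + α) * (b-1) ^ α) / ((b-1) ^ α * (b ^ α * b)) := by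
    field_simp
    ring
  rw [expand]
  apply div_nonneg
  · linarith [key]
  · positivity



section aux

variable {n : ℕ} {S : Set (EuclideanSpace ℝ (Fin n))} {δ α M ε₀ : ℝ}

lemma cthick_smul' {t ε : ℝ} (ht : 0 < t) (A : Set (EuclideanSpace ℝ (Fin n))) :
    cthickening ε (t • A) = t • cthickening (ε / t) A := by
  ext x
  rw [Set.mem_smul_set_iff_inv_smul_mem₀ ht.ne', mem_cthickening_iff, mem_cthickening_iff]
  have hx : x = t • (t⁻¹ • x) := by rw [smul_inv_smul₀ ht.ne']
  rw [show infEDist x (t • A) = infEDist (t • (t⁻¹ • x)) (t • A) by rw [← hx]]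
  rw [infEDist_smul₀ ht.ne' A (t⁻¹ • x)]
  have hnn : (‖t‖₊ : ENNReal) = ENNReal.ofReal t := by
    simp [← ENNReal.ofReal_coe_nnreal, Real.nnnorm_of_nonneg ht.le, Real.toNNReal_of_nonneg ht.le]
  rw [ENNReal.smul_def, smul_eq_mul, hnn, ENNReal.ofReal_div_of_pos ht,
    ENNReal.le_div_iff_mul_le (Or.inl (ENNReal.ofReal_pos.2 ht).ne') (Or.inl ENNReal.ofReal_ne_top),
    mul_comm]

lemma vol_cthick_smul' {t ε : ℝ} (ht : 0 < t) (A : Set (EuclideanSpace ℝ (Fin n))) :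
    volume (cthickening ε (t • A)) =
      ENNReal.ofReal (t ^ n) * volume (cthickening (ε / t) A) := by
  rw [cthick_smul' ht, Measure.addHaar_smul_of_nonneg volume ht.le, finrank_euclideanSpace_fin]

lemma vol_cthick_ne_top {A : Set (EuclideanSpace ℝ (Fin n))} (hA : Bornology.IsBounded A)
    (η : ℝ) : volume (cthickening η A) ≠ ⊤ :=
  (hA.cthickening.measure_lt_top).ne

lemma sphere_subset_bounded (hS : S ⊆ sphere 0 1) : Bornology.IsBounded S :=
  (Metric.isBounded_sphere).subset hS

/-- upper scaled estimate -/
lemma scaled_upper (hS : S ⊆ sphere 0 1) (hδn : True)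
    (hb : ∀ ε : ℝ, 0 < ε → ε ≤ ε₀ →
      M⁻¹ * ε ^ ((n : ℝ) - δ) ≤ (volume (cthickening ε S)).toReal ∧
      (volume (cthickening ε S)).toReal ≤ M * ε ^ ((n : ℝ) - δ))
    (hM : 0 < M) {t η : ℝ} (ht : 0 < t) (hη : 0 < η) (hv : η / t ≤ ε₀) :
    volume (cthickening η (t • S)) ≤ ENNReal.ofReal (M * t ^ δ * η ^ ((n : ℝ) - δ)) := by
  have hfin := vol_cthick_ne_top (sphere_subset_bounded hS) (η / t)
  have hpos : 0 < η / t := by positivity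
  have h1 : volume (cthickening (η / t) S) ≤ ENNReal.ofReal (M * (η / t) ^ ((n : ℝ) - δ)) := by
    rw [ENNReal.le_ofReal_iff_toReal_le hfin (by positivity)]
    exact (hb _ hpos hv).2
  rw [vol_cthick_smul' ht]
  calc ENNReal.ofReal (t ^ n) * volume (cthickening (η / t) S)
      ≤ ENNReal.ofReal (t ^ n) * ENNReal.ofReal (M * (η / t) ^ ((n : ℝ) - δ)) := by
        exact mul_le_mul_right h1 _
    _ = ENNReal.ofReal (t ^ n * (M * (η / t) ^ ((n : ℝ) - δ))) := by
        rw [← ENNReal.ofReal_mul (by positivity)]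
    _ = ENNReal.ofReal (M * t ^ δ * η ^ ((n : ℝ) - δ)) := by
        congr 1
        rw [Real.div_rpow hη.le ht.le, ← Real.rpow_natCast t n]
        rw [show t ^ (n:ℝ) * (M * (η ^ ((n:ℝ)-δ) / t ^ ((n:ℝ)-δ)))
            = M * (t ^ (n:ℝ) / t ^ ((n:ℝ)-δ)) * η ^ ((n:ℝ)-δ) by ring]
        rw [← Real.rpow_sub ht]
        ring_nf

/-- lower scaled estimate -/
lemma scaled_lower (hS : S ⊆ sphere 0 1)
    (hb : ∀ ε : ℝ, 0 < ε → ε ≤ ε₀ →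
      M⁻¹ * ε ^ ((n : ℝ) - δ) ≤ (volume (cthickening ε S)).toReal ∧
      (volume (cthickening ε S)).toReal ≤ M * ε ^ ((n : ℝ) - δ))
    (hM : 0 < M) {t η : ℝ} (ht : 0 < t) (hη : 0 < η) (hv : η / t ≤ ε₀) :
    ENNReal.ofReal (M⁻¹ * t ^ δ * η ^ ((n : ℝ) - δ)) ≤ volume (cthickening η (t • S)) := by
  have hfin := vol_cthick_ne_top (sphere_subset_bounded hS) (η / t)
  have hpos : 0 < η / t := by positivity
  have h1 : ENNReal.ofReal (M⁻¹ * (η / t) ^ ((n : ℝ) - δ)) ≤ volume (cthickening (η / t) S) := by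
    rw [ENNReal.ofReal_le_iff_le_toReal hfin]
    exact (hb _ hpos hv).1
  rw [vol_cthick_smul' ht]
  calc ENNReal.ofReal (M⁻¹ * t ^ δ * η ^ ((n : ℝ) - δ))
      = ENNReal.ofReal (t ^ n * (M⁻¹ * (η / t) ^ ((n : ℝ) - δ))) := by
        congr 1
        rw [Real.div_rpow hη.le ht.le, ← Real.rpow_natCast t n]
        rw [show t ^ (n:ℝ) * (M⁻¹ * (η ^ ((n:ℝ)-δ) / t ^ ((n:ℝ)-δ)))
            = M⁻¹ * (t ^ (n:ℝ) / t ^ ((n:ℝ)-δ)) * η ^ ((n:ℝ)-δ) by ring]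
        rw [← Real.rpow_sub ht]
        ring_nf
    _ = ENNReal.ofReal (t ^ n) * ENNReal.ofReal (M⁻¹ * (η / t) ^ ((n : ℝ) - δ)) := by
        rw [← ENNReal.ofReal_mul (by positivity)]
    _ ≤ ENNReal.ofReal (t ^ n) * volume (cthickening (η / t) S) := mul_le_mul_right h1 _

end aux



/-- The centre-type `α`-regular fractal nest `F_α S = ⋃_{k≥1} (k^{-α})·S`. -/
noncomputable def fractalNest (n : ℕ) (α : ℝ) (S : Set (EuclideanSpace ℝ (Fin n))) :
    Set (EuclideanSpace ℝ (Fin n)) :=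
  ⋃ k : ℕ, (((k : ℝ) + 1) ^ (-α)) • S

variable {n : ℕ} {S : Set (EuclideanSpace ℝ (Fin n))} {δ α M ε₀ : ℝ}

lemma thickening_mono_set {X : Type*} [PseudoEMetricSpace X] {A B : Set X} (h : A ⊆ B) (d : ℝ) :
    thickening d A ⊆ thickening d B :=
  fun _ hx => lt_of_le_of_lt (EMetric.infEdist_anti h) hx

lemma cthickening_mono_set {X : Type*} [PseudoEMetricSpace X] {A B : Set X} (h : A ⊆ B) (d : ℝ) :
    cthickening d A ⊆ cthickening d B :=
  fun _ hx => le_trans (EMetric.infEdist_anti h) hx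

example (hS : S ⊆ sphere 0 1) (hδ : 0 ≤ δ) (hα : 0 < α) (hαδ : α * δ < 1)
    (hM : 1 ≤ M) (hε₀ : 0 < ε₀)
    (hb : ∀ ε : ℝ, 0 < ε → ε ≤ ε₀ →
      M⁻¹ * ε ^ ((n : ℝ) - δ) ≤ (volume (cthickening ε S)).toReal ∧
      (volume (cthickening ε S)).toReal ≤ M * ε ^ ((n : ℝ) - δ)) :
    True := trivial

lemma nest_upper (hS : S ⊆ sphere 0 1) (hδ : 0 ≤ δ) (hα : 0 < α) (hαδ : α * δ < 1)
    (hM : 1 ≤ M) (hε₀ : 0 < ε₀)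
    (hb : ∀ ε : ℝ, 0 < ε → ε ≤ ε₀ →
      M⁻¹ * ε ^ ((n : ℝ) - δ) ≤ (volume (cthickening ε S)).toReal ∧
      (volume (cthickening ε S)).toReal ≤ M * ε ^ ((n : ℝ) - δ)) :
    ∃ C : ℝ, 0 < C ∧ ∃ ε₂ : ℝ, 0 < ε₂ ∧ ∀ ε : ℝ, 0 < ε → ε ≤ ε₂ →
      volume (cthickening ε (fractalNest n α S)) ≤
        ENNReal.ofReal (C * ε ^ ((n:ℝ) - (δ+1)/(α+1))) := by
  have hM0 : 0 < M := lt_of_lt_of_le one_pos hM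
  have hα1 : (0:ℝ) < α + 1 := by linarith
  have hβ0 : 0 ≤ α * δ := by positivity
  have hβ1 : 0 < 1 - α * δ := by linarith
  set B : ℝ := (volume (ball (0 : EuclideanSpace ℝ (Fin n)) 1)).toReal with hB
  have hB0 : 0 ≤ B := ENNReal.toReal_nonneg
  set j₀ : ℕ := ⌈3/ε₀⌉₊ with hj₀
  set C₁ : ℝ := 2*M*(2:ℝ)^((n:ℝ)-δ)*(1-α*δ)⁻¹ with hC₁
  set C₂ : ℝ := 4*(2:ℝ)^δ*(3:ℝ)^((n:ℝ)-δ)*M with hC₂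
  set C₃ : ℝ := 4*(((j₀:ℝ)+3)^n * B) with hC₃
  have hC₁0 : 0 < C₁ := by
    have : (0:ℝ) < (2:ℝ)^((n:ℝ)-δ) := Real.rpow_pos_of_pos two_pos _
    positivity
  have hC₂0 : 0 < C₂ := by
    have h2 : (0:ℝ) < (2:ℝ)^δ := Real.rpow_pos_of_pos two_pos _
    have h3 : (0:ℝ) < (3:ℝ)^((n:ℝ)-δ) := Real.rpow_pos_of_pos three_pos _
    positivity
  have hC₃0 : 0 ≤ C₃ := by positivity
  refine ⟨C₁ + C₂ + C₃, by linarith, min 1 ((ε₀/2^(α+1))^(α+1)), ?_, ?_⟩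
  · have : (0:ℝ) < (ε₀/2^(α+1))^(α+1) := by
      apply Real.rpow_pos_of_pos
      positivity
    exact lt_min one_pos this
  intro ε hε hεle
  have hε1 : ε ≤ 1 := hεle.trans (min_le_left _ _)
  have h2α : (0:ℝ) < (2:ℝ)^(α+1) := Real.rpow_pos_of_pos two_pos _
  have hεcond : ε ^ (α+1)⁻¹ ≤ ε₀ / 2 ^ (α+1) := by
    have h1 : ε ≤ (ε₀/2^(α+1))^(α+1) := hεle.trans (min_le_right _ _)
    have h2 : ε ^ (α+1)⁻¹ ≤ ((ε₀/2^(α+1))^(α+1)) ^ (α+1)⁻¹ :=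
      Real.rpow_le_rpow hε.le h1 (by positivity)
    rwa [Real.rpow_rpow_inv (by positivity) hα1.ne'] at h2
  set x : ℝ := ε ^ (-(α+1)⁻¹) with hxdef
  have hx0 : 0 < x := Real.rpow_pos_of_pos hε _
  have hx1 : 1 ≤ x :=
    Real.one_le_rpow_of_pos_of_le_one_of_nonpos hε hε1 (neg_nonpos.2 (by positivity))
  have hxp : ∀ e : ℝ, x ^ e = ε ^ (-(α+1)⁻¹ * e) := fun e => (Real.rpow_mul hε.le _ e).symm
  set N := ⌈x⌉₊ with hNdef
  have hxN : x ≤ (N:ℝ) := Nat.le_ceil x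
  have hN1 : (1:ℝ) ≤ (N:ℝ) := le_trans hx1 hxN
  have hN2x : (N:ℝ) ≤ 2 * x := by
    have := Nat.ceil_lt_add_one hx0.le
    linarith
  set r : ℕ → ℝ := fun k => ((k:ℝ)+1)^(-α) with hrdef
  have hrpos : ∀ k : ℕ, 0 < r k := fun k => Real.rpow_pos_of_pos (by positivity) _
  have hranti : ∀ {a b : ℝ}, 0 < a → a ≤ b → b ^ (-α) ≤ a ^ (-α) :=
    fun ha hab => Real.rpow_le_rpow_of_nonpos ha hab (neg_nonpos.2 hα.le)
  have hεxα : ε * x ^ α = ε ^ ((α+1)⁻¹) := by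
    rw [hxp α, show ε * ε ^ (-(α+1)⁻¹*α) = ε ^ (1 + -(α+1)⁻¹*α) by
      rw [Real.rpow_add hε, Real.rpow_one]]
    congr 1
    field_simp
    ring
  -- head validity
  have hval : ∀ k : ℕ, (k:ℝ)+1 ≤ (N:ℝ) → 2*ε/(r k) ≤ ε₀ := by
    intro k hk
    have h1 : (2*x)^(-α) ≤ r k := by
      calc (2*x)^(-α) ≤ ((k:ℝ)+1)^(-α) := hranti (by positivity) (hk.trans hN2x)
        _ = r k := rfl
    have h2 : 2*ε/(r k) ≤ 2*ε/((2*x)^(-α)) :=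
      div_le_div_of_nonneg_left (by positivity) (Real.rpow_pos_of_pos (by positivity) _) h1
    have h3 : 2*ε/((2*x)^(-α)) = 2^(α+1) * (ε * x^α) := by
      rw [Real.rpow_neg (by positivity), div_eq_mul_inv, inv_inv,
        Real.mul_rpow (by norm_num) hx0.le, Real.rpow_add_one two_ne_zero α]
      ring
    calc 2*ε/(r k) ≤ 2^(α+1) * (ε * x^α) := h2.trans_eq h3
      _ = 2^(α+1) * ε^((α+1)⁻¹) := by rw [hεxα]
      _ ≤ 2^(α+1) * (ε₀ / 2^(α+1)) := mul_le_mul_of_nonneg_left hεcond h2α.le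
      _ = ε₀ := by field_simp
  -- the cover
  have hεx : x ^ (-(α+1)) = ε := by
    rw [hxp]
    rw [show -(α+1)⁻¹ * -(α+1) = 1 by field_simp]
    exact Real.rpow_one ε
  have hεxx : ε * x = x ^ (-α) := by
    rw [← hεx, ← Real.rpow_add_one hx0.ne']
    congr 1; ring
  have hcover : cthickening ε (fractalNest n α S) ⊆
      (⋃ k ∈ Finset.range N, cthickening (2*ε) (r k • S)) ∪
      (⋃ j ∈ Finset.range (N+1), cthickening (3*ε) (((j:ℝ)*ε) • S)) := by
    intro y hy
    have h1 : y ∈ thickening (2*ε) (fractalNest n α S) :=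
      cthickening_subset_thickening' (by linarith) (by linarith) _ hy
    rw [fractalNest, thickening_iUnion] at h1
    obtain ⟨k, hk⟩ := Set.mem_iUnion.1 h1
    by_cases hkN : k < N
    · exact Or.inl (Set.mem_biUnion (Finset.mem_range.2 hkN)
        (thickening_subset_cthickening _ _ hk))
    · push_neg at hkN
      set j := ⌊r k / ε⌋₊ with hj
      have hrk := hrpos k
      have hjle : r k < ((j:ℝ)+1)*ε := by
        have h2 := Nat.lt_floor_add_one (r k / ε)
        calc r k = (r k / ε) * ε := by field_simp
          _ < ((j:ℝ)+1)*ε := by exact mul_lt_mul_of_pos_right h2 hε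
      have hjge : (j:ℝ)*ε ≤ r k := by
        have h4 : (j:ℝ) ≤ r k / ε := Nat.floor_le (by positivity)
        calc (j:ℝ)*ε ≤ (r k / ε) * ε := mul_le_mul_of_nonneg_right h4 hε.le
          _ = r k := by field_simp
      have hrkx : r k ≤ ε * x := by
        rw [hεxx]
        have h5 : x ≤ (k:ℝ)+1 := by
          have : (N:ℝ) ≤ (k:ℝ) := by exact_mod_cast hkN
          linarith [hxN]
        exact hranti hx0 h5
      have hjN : j ∈ Finset.range (N+1) := by
        rw [Finset.mem_range, Nat.lt_succ_iff, ← Nat.cast_le (α := ℝ)]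
        have h6 : (j:ℝ) ≤ r k / ε := Nat.floor_le (by positivity)
        have h7 : r k / ε ≤ x := by
          rw [div_le_iff₀ hε]; linarith [hrkx]
        linarith [hxN]
      have hsub : r k • S ⊆ cthickening ε (((j:ℝ)*ε) • S) := by
        rintro z ⟨s, hs, rfl⟩
        apply mem_cthickening_of_dist_le _ (((j:ℝ)*ε) • s) _ _ (Set.smul_mem_smul_set hs)
        have hsn : ‖s‖ = 1 := by simpa using hS hs
        rw [dist_eq_norm, ← sub_smul, norm_smul, hsn, mul_one, Real.norm_eq_abs,
          abs_of_nonneg (by linarith)]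
        linarith
      refine Or.inr (Set.mem_biUnion hjN ?_)
      have h8 : thickening (2*ε) (r k • S) ⊆ cthickening (3*ε) (((j:ℝ)*ε) • S) := by
        calc thickening (2*ε) (r k • S)
            ⊆ thickening (2*ε) (cthickening ε (((j:ℝ)*ε) • S)) := thickening_mono_set hsub _
          _ ⊆ thickening (2*ε + ε) (((j:ℝ)*ε) • S) := thickening_cthickening_subset _ hε.le _
          _ ⊆ cthickening (3*ε) (((j:ℝ)*ε) • S) := by
              rw [show 2*ε+ε = 3*ε by ring]
              exact thickening_subset_cthickening _ _
      exact h8 hk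
  -- exponent bookkeeping
  have hτ : ε ^ ((n:ℝ)-δ) * x^(1-α*δ) = ε ^ ((n:ℝ) - (δ+1)/(α+1)) := by
    rw [hxp, ← Real.rpow_add hε]
    congr 1
    field_simp
    ring
  -- head estimate
  have hhead : ∑ k ∈ Finset.range N, volume (cthickening (2*ε) (r k • S))
      ≤ ENNReal.ofReal (C₁ * ε ^ ((n:ℝ)-(δ+1)/(α+1))) := by
    have hterm : ∀ k ∈ Finset.range N, volume (cthickening (2*ε) (r k • S))
        ≤ ENNReal.ofReal (M * (r k)^δ * (2*ε) ^ ((n:ℝ)-δ)) := by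
      intro k hk
      apply scaled_upper hS trivial hb hM0 (hrpos k) (by linarith)
      exact hval k (by exact_mod_cast Nat.succ_le_of_lt (Finset.mem_range.1 hk))
    have hsum : ∑ k ∈ Finset.range N, (r k)^δ ≤ (1-α*δ)⁻¹ * (N:ℝ)^(1-α*δ) := by
      have he : ∀ k:ℕ, (r k)^δ = ((k:ℝ)+1)^(-(α*δ)) := by
        intro k
        rw [hrdef]
        rw [show -(α*δ) = (-α)*δ by ring, Real.rpow_mul (by positivity)]
      calc ∑ k ∈ Finset.range N, (r k)^δ = ∑ k ∈ Finset.range N, ((k:ℝ)+1)^(-(α*δ)) :=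
            Finset.sum_congr rfl (fun k _ => he k)
        _ ≤ (1-α*δ)⁻¹ * (N:ℝ)^(1-α*δ) := sum_rpow_neg_le hβ0 (by linarith) N
    have hN' : (N:ℝ)^(1-α*δ) ≤ 2 * x^(1-α*δ) := by
      calc (N:ℝ)^(1-α*δ) ≤ (2*x)^(1-α*δ) :=
            Real.rpow_le_rpow (by positivity) hN2x hβ1.le
        _ = 2^(1-α*δ) * x^(1-α*δ) := Real.mul_rpow (by norm_num) hx0.le
        _ ≤ 2 * x^(1-α*δ) := by
            apply mul_le_mul_of_nonneg_right _ (Real.rpow_nonneg hx0.le _)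
            calc (2:ℝ)^(1-α*δ) ≤ 2^(1:ℝ) :=
                  Real.rpow_le_rpow_of_exponent_le one_le_two (by linarith)
              _ = 2 := Real.rpow_one 2
    calc ∑ k ∈ Finset.range N, volume (cthickening (2*ε) (r k • S))
        ≤ ∑ k ∈ Finset.range N, ENNReal.ofReal (M * (r k)^δ * (2*ε) ^ ((n:ℝ)-δ)) :=
          Finset.sum_le_sum hterm
      _ = ENNReal.ofReal (∑ k ∈ Finset.range N, M * (r k)^δ * (2*ε) ^ ((n:ℝ)-δ)) :=
          (ENNReal.ofReal_sum_of_nonneg (fun i _ => by positivity)).symm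
      _ ≤ ENNReal.ofReal (C₁ * ε ^ ((n:ℝ)-(δ+1)/(α+1))) := by
          apply ENNReal.ofReal_le_ofReal
          have e1 : ∑ k ∈ Finset.range N, M * (r k)^δ * (2*ε) ^ ((n:ℝ)-δ)
              = (M * (2*ε) ^ ((n:ℝ)-δ)) * ∑ k ∈ Finset.range N, (r k)^δ := by
            rw [Finset.mul_sum]
            exact Finset.sum_congr rfl (fun k _ => by ring)
          rw [e1]
          have h2e : (0:ℝ) ≤ (2*ε) ^ ((n:ℝ)-δ) := Real.rpow_nonneg (by positivity) _
          calc (M * (2*ε) ^ ((n:ℝ)-δ)) * ∑ k ∈ Finset.range N, (r k)^δ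
              ≤ (M * (2*ε) ^ ((n:ℝ)-δ)) * ((1-α*δ)⁻¹ * (2 * x^(1-α*δ))) := by
                apply mul_le_mul_of_nonneg_left _ (by positivity)
                calc ∑ k ∈ Finset.range N, (r k)^δ ≤ (1-α*δ)⁻¹ * (N:ℝ)^(1-α*δ) := hsum
                  _ ≤ (1-α*δ)⁻¹ * (2 * x^(1-α*δ)) := by
                      exact mul_le_mul_of_nonneg_left hN' (by positivity)
            _ = C₁ * (ε ^ ((n:ℝ)-δ) * x^(1-α*δ)) := by
                rw [Real.mul_rpow (by norm_num) hε.le, hC₁]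
                ring
            _ = C₁ * ε ^ ((n:ℝ)-(δ+1)/(α+1)) := by rw [hτ]
  -- cone estimate
  have hj₀3 : (3:ℝ)/ε₀ ≤ (j₀:ℝ) := Nat.le_ceil _
  have hcone : ∑ j ∈ Finset.range (N+1), volume (cthickening (3*ε) (((j:ℝ)*ε) • S))
      ≤ ENNReal.ofReal ((C₂+C₃) * ε ^ ((n:ℝ)-(δ+1)/(α+1))) := by
    set b1 : ℝ := M * ((N:ℝ)*ε)^δ * (3*ε)^((n:ℝ)-δ) with hb1
    set b2 : ℝ := (((j₀:ℝ)+3)*ε)^n * B with hb2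
    have hb1nn : 0 ≤ b1 := by positivity
    have hb2nn : 0 ≤ b2 := by positivity
    have hterm : ∀ j ∈ Finset.range (N+1), volume (cthickening (3*ε) (((j:ℝ)*ε) • S))
        ≤ ENNReal.ofReal b1 + ENNReal.ofReal b2 := by
      intro j hjmem
      have hjN : (j:ℝ) ≤ (N:ℝ) := by
        exact_mod_cast Nat.lt_succ_iff.1 (Finset.mem_range.1 hjmem)
      rcases le_or_gt j j₀ with hc | hc
      · -- small j : ball bound
        refine le_trans ?_ (self_le_add_left _ _)
        have hss : ((j:ℝ)*ε) • S ⊆ closedBall 0 ((j:ℝ)*ε) := by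
          rintro z ⟨s, hs, rfl⟩
          have hsn : ‖s‖ = 1 := by simpa using hS hs
          rw [mem_closedBall_zero_iff, norm_smul, hsn, mul_one, Real.norm_eq_abs]
          exact le_of_eq (abs_of_nonneg (by positivity))
        have h1 : cthickening (3*ε) (((j:ℝ)*ε) • S) ⊆ closedBall 0 (3*ε + (j:ℝ)*ε) := by
          calc cthickening (3*ε) (((j:ℝ)*ε) • S)
              ⊆ cthickening (3*ε) (closedBall 0 ((j:ℝ)*ε)) := cthickening_mono_set hss _
            _ = closedBall 0 (3*ε + (j:ℝ)*ε) := cthickening_closedBall (by positivity) (by positivity) _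
        have hcj : (j:ℝ) ≤ (j₀:ℝ) := by exact_mod_cast hc
        calc volume (cthickening (3*ε) (((j:ℝ)*ε) • S))
            ≤ volume (closedBall (0 : EuclideanSpace ℝ (Fin n)) (3*ε + (j:ℝ)*ε)) :=
              measure_mono h1
          _ ≤ volume (closedBall (0 : EuclideanSpace ℝ (Fin n)) (((j₀:ℝ)+3)*ε)) := by
              apply measure_mono (closedBall_subset_closedBall ?_)
              nlinarith
          _ = ENNReal.ofReal ((((j₀:ℝ)+3)*ε)^n) *
              volume (ball (0 : EuclideanSpace ℝ (Fin n)) 1) := by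
              rw [Measure.addHaar_closedBall volume _ (by positivity), finrank_euclideanSpace_fin]
          _ ≤ ENNReal.ofReal b2 := by
              rw [hb2, ENNReal.ofReal_mul (by positivity), hB,
                ENNReal.ofReal_toReal measure_ball_lt_top.ne]
      · -- large j : scaled bound
        have hj1 : (1:ℕ) ≤ j := Nat.one_le_iff_ne_zero.2 (by omega)
        have hj1' : (1:ℝ) ≤ (j:ℝ) := by exact_mod_cast hj1
        have hjpos : (0:ℝ) < (j:ℝ)*ε := by positivity
        have hcj : (j₀:ℝ) ≤ (j:ℝ) := by exact_mod_cast hc.le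
        have hvalid : (3*ε)/((j:ℝ)*ε) ≤ ε₀ := by
          rw [show (3*ε)/((j:ℝ)*ε) = 3/(j:ℝ) by field_simp]
          rw [div_le_iff₀ (by linarith)]
          have h3j : (3:ℝ)/ε₀ ≤ (j:ℝ) := le_trans hj₀3 hcj
          rw [div_le_iff₀ hε₀] at h3j
          linarith
        refine le_trans ?_ (self_le_add_right _ _)
        refine le_trans (scaled_upper hS trivial hb hM0 hjpos (by linarith) hvalid) ?_
        apply ENNReal.ofReal_le_ofReal
        rw [hb1]
        have : ((j:ℝ)*ε)^δ ≤ ((N:ℝ)*ε)^δ :=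
          Real.rpow_le_rpow (by positivity) (mul_le_mul_of_nonneg_right hjN hε.le) hδ
        have h3e : (0:ℝ) ≤ (3*ε)^((n:ℝ)-δ) := Real.rpow_nonneg (by positivity) _
        calc M * ((j:ℝ)*ε)^δ * (3*ε)^((n:ℝ)-δ) ≤ M * ((N:ℝ)*ε)^δ * (3*ε)^((n:ℝ)-δ) := by
              apply mul_le_mul_of_nonneg_right _ h3e
              exact mul_le_mul_of_nonneg_left this hM0.le
          _ = M * ((N:ℝ)*ε)^δ * (3*ε)^((n:ℝ)-δ) := rfl
    have hxδ1 : x * x ^ δ = x ^ (δ+1) := by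
      rw [Real.rpow_add_one hx0.ne' δ]; ring
    have hτ2 : ε ^ (n:ℝ) * x ^ (δ+1) = ε ^ ((n:ℝ)-(δ+1)/(α+1)) := by
      rw [hxp, ← Real.rpow_add hε]
      congr 1
      field_simp
      ring
    have hreal1 : ((N:ℝ)+1) * b1 ≤ C₂ * ε ^ ((n:ℝ)-(δ+1)/(α+1)) := by
      have e2 : ((N:ℝ)*ε)^δ = (N:ℝ)^δ * ε^δ := Real.mul_rpow (by positivity) hε.le
      have e3 : (3*ε)^((n:ℝ)-δ) = 3^((n:ℝ)-δ) * ε^((n:ℝ)-δ) := Real.mul_rpow (by norm_num) hε.le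
      have e4 : (N:ℝ)^δ ≤ (2*x)^δ := Real.rpow_le_rpow (by positivity) hN2x hδ
      have e5 : (2*x)^δ = 2^δ * x^δ := Real.mul_rpow (by norm_num) hx0.le
      have e6 : ε^δ * ε^((n:ℝ)-δ) = ε^(n:ℝ) := by
        rw [← Real.rpow_add hε]; congr 1; ring
      have hN4x : (N:ℝ)+1 ≤ 4*x := by linarith
      have h2δ : (0:ℝ) < (2:ℝ)^δ := Real.rpow_pos_of_pos two_pos _
      have h3nδ : (0:ℝ) < (3:ℝ)^((n:ℝ)-δ) := Real.rpow_pos_of_pos three_pos _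
      have hxδ : (0:ℝ) < x^δ := Real.rpow_pos_of_pos hx0 _
      have hεδ : (0:ℝ) ≤ ε^δ := Real.rpow_nonneg hε.le _
      have hεnδ : (0:ℝ) ≤ ε^((n:ℝ)-δ) := Real.rpow_nonneg hε.le _
      calc ((N:ℝ)+1) * b1 = ((N:ℝ)+1) * M * ((N:ℝ)^δ * ε^δ) * (3^((n:ℝ)-δ) * ε^((n:ℝ)-δ)) := by
            rw [hb1, e2, e3]; ring
        _ ≤ (4*x) * M * ((2^δ * x^δ) * ε^δ) * (3^((n:ℝ)-δ) * ε^((n:ℝ)-δ)) := by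
            apply mul_le_mul_of_nonneg_right _ (by positivity)
            have : (N:ℝ)^δ * ε^δ ≤ (2^δ * x^δ) * ε^δ :=
              mul_le_mul_of_nonneg_right (e4.trans_eq e5) hεδ
            have hNM : ((N:ℝ)+1) * M ≤ (4*x) * M :=
              mul_le_mul_of_nonneg_right hN4x hM0.le
            apply mul_le_mul hNM this (by positivity) (by positivity)
        _ = C₂ * ((x * x^δ) * (ε^δ * ε^((n:ℝ)-δ))) := by rw [hC₂]; ring
        _ = C₂ * ε ^ ((n:ℝ)-(δ+1)/(α+1)) := by
            rw [hxδ1, e6, ← hτ2]; ring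
    have hreal2 : ((N:ℝ)+1) * b2 ≤ C₃ * ε ^ ((n:ℝ)-(δ+1)/(α+1)) := by
      have e7 : ((((j₀:ℝ)+3))*ε)^n = ((j₀:ℝ)+3)^n * ε^n := mul_pow _ _ n
      have e8 : x * ε^(n:ℕ) = ε ^ ((n:ℝ) - (α+1)⁻¹) := by
        rw [← Real.rpow_natCast ε n, hxdef, ← Real.rpow_add hε]
        congr 1
        ring
      have e9 : ε ^ ((n:ℝ) - (α+1)⁻¹) ≤ ε ^ ((n:ℝ)-(δ+1)/(α+1)) := by
        apply Real.rpow_le_rpow_of_exponent_ge hε hε1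
        have : (α+1)⁻¹ ≤ (δ+1)/(α+1) := by
          rw [div_eq_mul_inv]
          nlinarith [inv_pos.2 hα1]
        linarith
      have hN4x : (N:ℝ)+1 ≤ 4*x := by linarith
      calc ((N:ℝ)+1) * b2 = ((N:ℝ)+1) * (((j₀:ℝ)+3)^n * ε^n * B) := by rw [hb2, e7]
        _ ≤ (4*x) * (((j₀:ℝ)+3)^n * ε^n * B) := by
            apply mul_le_mul_of_nonneg_right hN4x (by positivity)
        _ = C₃ * (x * ε^(n:ℕ)) := by rw [hC₃]; ring
        _ = C₃ * ε ^ ((n:ℝ) - (α+1)⁻¹) := by rw [e8]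
        _ ≤ C₃ * ε ^ ((n:ℝ)-(δ+1)/(α+1)) := mul_le_mul_of_nonneg_left e9 hC₃0
    calc ∑ j ∈ Finset.range (N+1), volume (cthickening (3*ε) (((j:ℝ)*ε) • S))
        ≤ ∑ _j ∈ Finset.range (N+1), (ENNReal.ofReal b1 + ENNReal.ofReal b2) :=
          Finset.sum_le_sum hterm
      _ = (N+1) • (ENNReal.ofReal b1 + ENNReal.ofReal b2) := by
          rw [Finset.sum_const, Finset.card_range]
      _ = ENNReal.ofReal ((N+1) • b1) + ENNReal.ofReal ((N+1) • b2) := by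
          rw [smul_add, ENNReal.ofReal_nsmul, ENNReal.ofReal_nsmul]
      _ ≤ ENNReal.ofReal (C₂ * ε ^ ((n:ℝ)-(δ+1)/(α+1))) +
          ENNReal.ofReal (C₃ * ε ^ ((n:ℝ)-(δ+1)/(α+1))) := by
          apply add_le_add <;> apply ENNReal.ofReal_le_ofReal
          · rw [nsmul_eq_mul]; push_cast; exact hreal1
          · rw [nsmul_eq_mul]; push_cast; exact hreal2
      _ = ENNReal.ofReal ((C₂+C₃) * ε ^ ((n:ℝ)-(δ+1)/(α+1))) := by
          rw [← ENNReal.ofReal_add (by positivity) (by positivity)]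
          ring_nf
    -- final combination
  calc volume (cthickening ε (fractalNest n α S))
      ≤ volume ((⋃ k ∈ Finset.range N, cthickening (2*ε) (r k • S)) ∪
          (⋃ j ∈ Finset.range (N+1), cthickening (3*ε) (((j:ℝ)*ε) • S))) :=
        measure_mono hcover
    _ ≤ volume (⋃ k ∈ Finset.range N, cthickening (2*ε) (r k • S)) +
        volume (⋃ j ∈ Finset.range (N+1), cthickening (3*ε) (((j:ℝ)*ε) • S)) :=
        measure_union_le _ _
    _ ≤ (∑ k ∈ Finset.range N, volume (cthickening (2*ε) (r k • S))) +
        (∑ j ∈ Finset.range (N+1), volume (cthickening (3*ε) (((j:ℝ)*ε) • S))) :=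
        add_le_add (measure_biUnion_finset_le _ _) (measure_biUnion_finset_le _ _)
    _ ≤ ENNReal.ofReal (C₁ * ε ^ ((n:ℝ)-(δ+1)/(α+1))) +
        ENNReal.ofReal ((C₂+C₃) * ε ^ ((n:ℝ)-(δ+1)/(α+1))) := add_le_add hhead hcone
    _ = ENNReal.ofReal ((C₁+C₂+C₃) * ε ^ ((n:ℝ)-(δ+1)/(α+1))) := by
        rw [← ENNReal.ofReal_add (by positivity) (by positivity)]
        ring_nf

lemma nest_lower (hS : S ⊆ sphere 0 1) (hδ : 0 ≤ δ) (hα : 0 < α) (hαδ : α * δ < 1)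
    (hM : 1 ≤ M) (hε₀ : 0 < ε₀)
    (hb : ∀ ε : ℝ, 0 < ε → ε ≤ ε₀ →
      M⁻¹ * ε ^ ((n : ℝ) - δ) ≤ (volume (cthickening ε S)).toReal ∧
      (volume (cthickening ε S)).toReal ≤ M * ε ^ ((n : ℝ) - δ)) :
    ∃ c : ℝ, 0 < c ∧ ∃ ε₂ : ℝ, 0 < ε₂ ∧ ∀ ε : ℝ, 0 < ε → ε ≤ ε₂ →
      ENNReal.ofReal (c * ε ^ ((n:ℝ) - (δ+1)/(α+1))) ≤
        volume (cthickening ε (fractalNest n α S)) := by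
  have hM0 : 0 < M := lt_of_lt_of_le one_pos hM
  have hα1 : (0:ℝ) < α + 1 := by linarith
  have hβ0 : 0 ≤ α * δ := by positivity
  have hβ1 : 0 < 1 - α * δ := by linarith
  set q : ℝ := (1-α*δ)/(α+1) with hq
  have hα4 : (0:ℝ) < α/4 := by linarith
  set c : ℝ := (2*M)⁻¹ * (α/4)^q with hc
  have hc0 : 0 < c := by
    have := Real.rpow_pos_of_pos hα4 q
    positivity
  have h2α : (0:ℝ) < (2:ℝ)^(α+1) := Real.rpow_pos_of_pos two_pos _
  have hmax : (0:ℝ) < max 1 ((α/(4*ε₀))^(α+1)) := lt_of_lt_of_le one_pos (le_max_left _ _)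
  refine ⟨c, hc0, min (α/(4*2^(α+1))) ((α/4) / max 1 ((α/(4*ε₀))^(α+1))), by positivity, ?_⟩
  intro ε hε hεle
  have hεa : ε ≤ α/(4*2^(α+1)) := hεle.trans (min_le_left _ _)
  have hεb : ε ≤ (α/4) / max 1 ((α/(4*ε₀))^(α+1)) := hεle.trans (min_le_right _ _)
  set X : ℝ := α/(4*ε) with hX
  have hX0 : 0 < X := by positivity
  set T : ℝ := X ^ ((α+1)⁻¹) with hT
  have hT0 : 0 < T := Real.rpow_pos_of_pos hX0 _
  have hTX : T ^ (α+1) = X := Real.rpow_inv_rpow hX0.le hα1.ne'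
  have hT2 : 2 ≤ T := by
    have h1 : (2:ℝ)^(α+1) ≤ X := by
      rw [hX, le_div_iff₀ (by positivity)]
      rw [le_div_iff₀ (by positivity)] at hεa
      nlinarith
    calc (2:ℝ) = ((2:ℝ)^(α+1))^((α+1)⁻¹) := (Real.rpow_rpow_inv (by norm_num) hα1.ne').symm
      _ ≤ X ^ ((α+1)⁻¹) := Real.rpow_le_rpow (by positivity) h1 (by positivity)
  have hTe : α/(4*ε₀) ≤ T := by
    have h1 : (α/(4*ε₀))^(α+1) ≤ X := by
      rw [hX, le_div_iff₀ (by positivity)]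
      rw [le_div_iff₀ hmax] at hεb
      calc (α/(4*ε₀))^(α+1) * (4*ε) ≤ max 1 ((α/(4*ε₀))^(α+1)) * (4*ε) := by
            apply mul_le_mul_of_nonneg_right (le_max_right _ _) (by positivity)
        _ ≤ α := by nlinarith
    calc α/(4*ε₀) = ((α/(4*ε₀))^(α+1))^((α+1)⁻¹) :=
          (Real.rpow_rpow_inv (by positivity) hα1.ne').symm
      _ ≤ X ^ ((α+1)⁻¹) := Real.rpow_le_rpow (by positivity) h1 (by positivity)
  set K := ⌊T⌋₊ with hK
  have hKT : (K:ℝ) ≤ T := Nat.floor_le hT0.le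
  have hTK : T < (K:ℝ) + 1 := Nat.lt_floor_add_one T
  have hK2 : T/2 ≤ (K:ℝ) := by linarith
  set r : ℕ → ℝ := fun k => ((k:ℝ)+1)^(-α) with hrdef
  have hrpos : ∀ k : ℕ, 0 < r k := fun k => Real.rpow_pos_of_pos (by positivity) _
  have hranti : ∀ {a b : ℝ}, 0 < a → a ≤ b → b ^ (-α) ≤ a ^ (-α) :=
    fun ha hab => Real.rpow_le_rpow_of_nonpos ha hab (neg_nonpos.2 hα.le)
  have hTinv : T ^ (-(α+1)) = 4*ε/α := by
    rw [Real.rpow_neg hT0.le, hTX, hX]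
    field_simp
  -- validity : ε / r k ≤ ε₀ for k+1 ≤ T
  have hval : ∀ k : ℕ, (k:ℝ)+1 ≤ T → ε / r k ≤ ε₀ := by
    intro k hk
    have h1 : T^(-α) ≤ r k := hranti (by positivity) hk
    have h2 : ε / r k ≤ ε / T^(-α) :=
      div_le_div_of_nonneg_left hε.le (Real.rpow_pos_of_pos hT0 _) h1
    have h3 : ε / T^(-α) = ε * T^α := by
      rw [Real.rpow_neg hT0.le, div_eq_mul_inv, inv_inv]
    have h4 : ε * T^α = (α/4) * T⁻¹ := by
      have e1 : T^α = T^(α+1) * T⁻¹ := by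
        rw [Real.rpow_add_one hT0.ne' α]
        field_simp
      rw [e1, hTX, hX]
      field_simp
    have h5 : (α/4) * T⁻¹ ≤ ε₀ := by
      have h6 : α ≤ 4*ε₀*T := by
        have := hTe
        rw [div_le_iff₀ (by positivity)] at this
        linarith
      rw [mul_comm, inv_mul_le_iff₀ hT0]
      linarith
    calc ε / r k ≤ ε * T^α := h2.trans_eq h3
      _ = (α/4) * T⁻¹ := h4
      _ ≤ ε₀ := h5
  -- separation
  have hsep : ∀ j k : ℕ, j < k → k < K → 4*ε ≤ r j - r k := by
    intro j k hjk hkK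
    have hb2 : (2:ℝ) ≤ (k:ℝ)+1 := by
      have : (1:ℝ) ≤ (k:ℝ) := by exact_mod_cast Nat.one_le_iff_ne_zero.2 (by omega)
      linarith
    have hgap := gap_lower hα hb2
    have hkT : (k:ℝ)+1 ≤ T := by
      have h0 : (k:ℝ)+1 ≤ (K:ℝ) := by exact_mod_cast hkK
      exact h0.trans hKT
    have h7 : T^(-(α+1)) ≤ ((k:ℝ)+1)^(-(α+1)) :=
      Real.rpow_le_rpow_of_nonpos (by positivity) hkT (by linarith)
    have h8 : 4*ε ≤ α * ((k:ℝ)+1)^(-(α+1)) := by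
      have h9 := mul_le_mul_of_nonneg_left h7 hα.le
      rw [hTinv] at h9
      calc 4*ε = α * (4*ε/α) := by field_simp
        _ ≤ α * ((k:ℝ)+1)^(-(α+1)) := h9
    have hjk' : (j:ℝ)+1 ≤ (k:ℝ) := by exact_mod_cast hjk
    have h10 : (k:ℝ)^(-α) ≤ r j := hranti (by positivity) hjk'
    have h11 : (k:ℝ)+1-1 = (k:ℝ) := by ring
    rw [h11] at hgap
    have h12 : r k = ((k:ℝ)+1)^(-α) := rfl
    linarith [hgap, h8, h10]
  -- spheres
  have hsph : ∀ k : ℕ, r k • S ⊆ sphere 0 (r k) := by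
    intro k z hz
    obtain ⟨s, hs, rfl⟩ := hz
    have hsn : ‖s‖ = 1 := by simpa using hS hs
    simp [mem_sphere_zero_iff_norm, norm_smul, hsn, Real.norm_eq_abs,
      abs_of_nonneg (hrpos k).le]
  -- disjointness
  have hkey : ∀ j k : ℕ, j < k → k < K →
      Disjoint (cthickening ε (r j • S)) (cthickening ε (r k • S)) := by
    intro j k hlt hkK
    rw [Set.disjoint_left]
    intro x hxj hxk
    have h1 : |‖x‖ - r j| ≤ ε := norm_mem_cthick_sphere (hsph j) hε.le hxj
    have h2 : |‖x‖ - r k| ≤ ε := norm_mem_cthick_sphere (hsph k) hε.le hxk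
    have h3 := hsep j k hlt hkK
    rw [abs_le] at h1 h2
    linarith
  have hdisj : (Finset.range K : Set ℕ).PairwiseDisjoint
      (fun k => cthickening ε (r k • S)) := by
    intro j hj k hk hjk
    rcases lt_or_gt_of_ne hjk with h | h
    · exact hkey j k h (by simpa using hk)
    · exact (hkey k j h (by simpa using hj)).symm
  have hsum := measure_biUnion_finset (μ := volume) hdisj
    (fun k _ => (isClosed_cthickening).measurableSet)
  have hsubF : ∀ k:ℕ, cthickening ε (r k • S) ⊆ cthickening ε (fractalNest n α S) := by
    intro k
    apply cthickening_mono_set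
    exact Set.subset_iUnion (fun k : ℕ => (((k:ℝ)+1)^(-α)) • S) k
  have hterm : ∀ k ∈ Finset.range K, ENNReal.ofReal (M⁻¹ * T^(-(α*δ)) * ε^((n:ℝ)-δ))
      ≤ volume (cthickening ε (r k • S)) := by
    intro k hk
    have hkT : (k:ℝ)+1 ≤ T := by
      have h0 : (k:ℝ)+1 ≤ (K:ℝ) := by exact_mod_cast Finset.mem_range.1 hk
      exact h0.trans hKT
    have h1 := scaled_lower hS hb hM0 (hrpos k) hε (hval k hkT)
    refine le_trans (ENNReal.ofReal_le_ofReal ?_) h1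
    have h3 : T^(-α) ≤ r k := hranti (by positivity) hkT
    have h2 : T^(-(α*δ)) ≤ (r k)^δ := by
      have h4 : (T^(-α))^δ ≤ (r k)^δ :=
        Real.rpow_le_rpow (Real.rpow_nonneg hT0.le _) h3 hδ
      rwa [← Real.rpow_mul hT0.le, show -α*δ = -(α*δ) by ring] at h4
    have h5 : (0:ℝ) ≤ ε^((n:ℝ)-δ) := Real.rpow_nonneg hε.le _
    exact mul_le_mul_of_nonneg_right
      (mul_le_mul_of_nonneg_left h2 (by positivity)) h5
  have hreal : c * ε^((n:ℝ)-(δ+1)/(α+1)) ≤ (K:ℝ) * (M⁻¹ * T^(-(α*δ)) * ε^((n:ℝ)-δ)) := by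
    have hTq : T^(1-α*δ) = (α/4)^q * (ε^q)⁻¹ := by
      rw [hT, ← Real.rpow_mul hX0.le,
        show (α+1)⁻¹*(1-α*δ) = q by rw [hq, div_eq_inv_mul], hX,
        ← div_div α 4 ε, Real.div_rpow hα4.le hε.le, div_eq_mul_inv]
    have hεq : ε^((n:ℝ)-δ) * (ε^q)⁻¹ = ε^((n:ℝ)-(δ+1)/(α+1)) := by
      rw [← Real.rpow_neg hε.le, ← Real.rpow_add hε]
      congr 1
      rw [hq]
      field_simp
      ring
    have e2 : T * T^(-(α*δ)) = T^(1-α*δ) := by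
      rw [show (1-α*δ) = -(α*δ)+1 by ring, Real.rpow_add_one hT0.ne']
      ring
    have e1 : (T/2) * (M⁻¹ * T^(-(α*δ)) * ε^((n:ℝ)-δ)) = c * ε^((n:ℝ)-(δ+1)/(α+1)) := by
      calc (T/2) * (M⁻¹ * T^(-(α*δ)) * ε^((n:ℝ)-δ))
          = (2*M)⁻¹ * ((T * T^(-(α*δ))) * ε^((n:ℝ)-δ)) := by rw [mul_inv]; ring
        _ = (2*M)⁻¹ * (((α/4)^q * (ε^q)⁻¹) * ε^((n:ℝ)-δ)) := by rw [e2, hTq]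
        _ = (2*M)⁻¹ * ((α/4)^q * (ε^((n:ℝ)-δ) * (ε^q)⁻¹)) := by ring
        _ = c * ε^((n:ℝ)-(δ+1)/(α+1)) := by rw [hεq, hc]; ring
    rw [← e1]
    apply mul_le_mul_of_nonneg_right hK2 (by positivity)
  calc ENNReal.ofReal (c * ε^((n:ℝ)-(δ+1)/(α+1)))
      ≤ ENNReal.ofReal ((K:ℝ) * (M⁻¹ * T^(-(α*δ)) * ε^((n:ℝ)-δ))) :=
        ENNReal.ofReal_le_ofReal hreal
    _ = K • ENNReal.ofReal (M⁻¹ * T^(-(α*δ)) * ε^((n:ℝ)-δ)) := by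
        rw [← ENNReal.ofReal_nsmul]
        congr 1
        rw [nsmul_eq_mul]
    _ = ∑ _k ∈ Finset.range K, ENNReal.ofReal (M⁻¹ * T^(-(α*δ)) * ε^((n:ℝ)-δ)) := by
        rw [Finset.sum_const, Finset.card_range]
    _ ≤ ∑ k ∈ Finset.range K, volume (cthickening ε (r k • S)) := Finset.sum_le_sum hterm
    _ = volume (⋃ k ∈ Finset.range K, cthickening ε (r k • S)) := hsum.symm
    _ ≤ volume (cthickening ε (fractalNest n α S)) :=
        measure_mono (Set.iUnion₂_subset fun k _ => hsubF k)


/-- **Centre-type nests, case `αδ < 1` (Theorem 1).** If `S ⊆ S^{n-1}` is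
Minkowski non-degenerate of box dimension `δ ≥ 0` (i.e. `λ(S_ε) ∼ ε^{n-δ}`)
and `αδ < 1`, then `F_α S` is Minkowski non-degenerate of box dimension
`(δ+1)/(α+1)`: `λ((F_α S)_ε) ∼ ε^{n-(δ+1)/(α+1)}` for small `ε`. -/
theorem dimB_fractalNest_of_lt (n : ℕ) (S : Set (EuclideanSpace ℝ (Fin n)))
    (hS : S ⊆ Metric.sphere 0 1) (δ : ℝ) (hδ : 0 ≤ δ) (α : ℝ) (hα : 0 < α)
    (hαδ : α * δ < 1)
    (hnd : ∃ M : ℝ, 1 ≤ M ∧ ∃ ε₀ : ℝ, 0 < ε₀ ∧ ∀ ε : ℝ, 0 < ε → ε ≤ ε₀ →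
      M⁻¹ * ε ^ ((n : ℝ) - δ) ≤ (volume (Metric.cthickening ε S)).toReal ∧
      (volume (Metric.cthickening ε S)).toReal ≤ M * ε ^ ((n : ℝ) - δ)) :
    ∃ M : ℝ, 1 ≤ M ∧ ∃ ε₀ : ℝ, 0 < ε₀ ∧ ∀ ε : ℝ, 0 < ε → ε ≤ ε₀ →
      M⁻¹ * ε ^ ((n : ℝ) - (δ + 1) / (α + 1)) ≤
          (volume (Metric.cthickening ε (fractalNest n α S))).toReal ∧
        (volume (Metric.cthickening ε (fractalNest n α S))).toReal ≤
          M * ε ^ ((n : ℝ) - (δ + 1) / (α + 1)) := by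
  obtain ⟨M, hM1, ε₀, hε₀, hb⟩ := hnd
  obtain ⟨C, hC0, ε₂, hε₂, hup⟩ := nest_upper hS hδ hα hαδ hM1 hε₀ hb
  obtain ⟨c, hc0, ε₃, hε₃, hlo⟩ := nest_lower hS hδ hα hαδ hM1 hε₀ hb
  refine ⟨max (max C c⁻¹) 1, le_max_right _ _, min ε₂ ε₃, lt_min hε₂ hε₃, ?_⟩
  intro ε hε hεle
  have hα1 : (0:ℝ) < α + 1 := by linarith
  have hεp : (0:ℝ) < ε ^ ((n : ℝ) - (δ + 1) / (α + 1)) := Real.rpow_pos_of_pos hε _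
  have hFsub : fractalNest n α S ⊆ closedBall 0 1 := by
    rw [fractalNest]
    apply Set.iUnion_subset
    intro k
    rintro z ⟨s, hs, rfl⟩
    have hsn : ‖s‖ = 1 := by simpa using hS hs
    rw [mem_closedBall_zero_iff, norm_smul, hsn, mul_one, Real.norm_eq_abs,
      abs_of_nonneg (Real.rpow_nonneg (by positivity) _)]
    exact Real.rpow_le_one_of_one_le_of_nonpos (by push_cast; linarith)
      (neg_nonpos.2 hα.le)
  have hFfin : volume (cthickening ε (fractalNest n α S)) ≠ ⊤ :=
    vol_cthick_ne_top ((Metric.isBounded_closedBall).subset hFsub) ε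
  constructor
  · have h1 := hlo ε hε (hεle.trans (min_le_right _ _))
    rw [ENNReal.ofReal_le_iff_le_toReal hFfin] at h1
    have h2 : c⁻¹ ≤ max (max C c⁻¹) 1 := (le_max_right C c⁻¹).trans (le_max_left _ 1)
    have h3 : (max (max C c⁻¹) 1)⁻¹ ≤ c := by
      have h4 : (max (max C c⁻¹) 1)⁻¹ ≤ (c⁻¹)⁻¹ :=
        inv_anti₀ (inv_pos.2 hc0) h2
      rwa [inv_inv] at h4
    calc (max (max C c⁻¹) 1)⁻¹ * ε ^ ((n : ℝ) - (δ + 1) / (α + 1))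
        ≤ c * ε ^ ((n : ℝ) - (δ + 1) / (α + 1)) :=
          mul_le_mul_of_nonneg_right h3 hεp.le
      _ ≤ (volume (cthickening ε (fractalNest n α S))).toReal := h1
  · have h2 := hup ε hε (hεle.trans (min_le_left _ _))
    have h3 := ENNReal.toReal_le_of_le_ofReal (by positivity) h2
    calc (volume (cthickening ε (fractalNest n α S))).toReal
        ≤ C * ε ^ ((n : ℝ) - (δ + 1) / (α + 1)) := h3
      _ ≤ max (max C c⁻¹) 1 * ε ^ ((n : ℝ) - (δ + 1) / (α + 1)) :=
          mul_le_mul_of_nonneg_right ((le_max_left C c⁻¹).trans (le_max_left _ 1)) hεp.le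
end

section
/- Let S ⊆ S^{n-1} ⊆ ℝⁿ be Minkowski non-degenerate of box dimension δ > 0 with λ((S)_ε) ∼ ε^{n-δ}. If αδ > 1, then F_α S = ⋃_{k≥1} (k^{-α})S is Minkowski non-degenerate of box dimension δ: λ((F_α S)_ε) ∼ ε^{n-δ} as ε → 0. -/
open MeasureTheory Pointwise

/-- Scaled thickenings embed into scaled cthickenings. -/
lemma thickening_smul_subset (n : ℕ) (c r : ℝ) (hc : 0 < c)
    (S : Set (EuclideanSpace ℝ (Fin n))) :
    Metric.thickening r (c • S) ⊆ c • Metric.cthickening (r / c) S := by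
  intro x hx
  rw [Metric.mem_thickening_iff] at hx
  obtain ⟨z, hz, hd⟩ := hx
  obtain ⟨s, hs, rfl⟩ := hz
  refine ⟨c⁻¹ • x, ?_, smul_inv_smul₀ hc.ne' x⟩
  apply Metric.thickening_subset_cthickening
  rw [Metric.mem_thickening_iff]
  refine ⟨s, hs, ?_⟩
  have h1 : dist (c • (c⁻¹ • x)) (c • s) = ‖c‖ * dist (c⁻¹ • x) s := dist_smul₀ c _ s
  rw [smul_inv_smul₀ hc.ne'] at h1
  have h2 : dist (c⁻¹ • x) s = c⁻¹ * dist x (c • s) := by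
    rw [h1, Real.norm_eq_abs, abs_of_pos hc, ← mul_assoc, inv_mul_cancel₀ hc.ne', one_mul]
  rw [h2, div_eq_inv_mul]
  exact mul_lt_mul_of_pos_left hd (inv_pos.mpr hc)

/-- **Centre-type nests, case `αδ > 1` (Theorem 1).** If `S ⊆ S^{n-1}` is
Minkowski non-degenerate of box dimension `δ > 0` (i.e. `λ(S_ε) ∼ ε^{n-δ}`)
and `αδ > 1`, then `F_α S` is Minkowski non-degenerate of box dimension `δ`:
`λ((F_α S)_ε) ∼ ε^{n-δ}` for small `ε`. -/
theorem dimB_fractalNest_of_gt (n : ℕ) (S : Set (EuclideanSpace ℝ (Fin n)))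
    (hS : S ⊆ Metric.sphere 0 1) (δ : ℝ) (hδ : 0 < δ) (α : ℝ) (hα : 0 < α)
    (hαδ : 1 < α * δ)
    (hnd : ∃ M : ℝ, 1 ≤ M ∧ ∃ ε₀ : ℝ, 0 < ε₀ ∧ ∀ ε : ℝ, 0 < ε → ε ≤ ε₀ →
      M⁻¹ * ε ^ ((n : ℝ) - δ) ≤ (volume (Metric.cthickening ε S)).toReal ∧
      (volume (Metric.cthickening ε S)).toReal ≤ M * ε ^ ((n : ℝ) - δ)) :
    ∃ M : ℝ, 1 ≤ M ∧ ∃ ε₀ : ℝ, 0 < ε₀ ∧ ∀ ε : ℝ, 0 < ε → ε ≤ ε₀ →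
      M⁻¹ * ε ^ ((n : ℝ) - δ) ≤
          (volume (Metric.cthickening ε (fractalNest n α S))).toReal ∧
        (volume (Metric.cthickening ε (fractalNest n α S))).toReal ≤
          M * ε ^ ((n : ℝ) - δ) := by
  classical
  obtain ⟨M, hM1, ε₀, hε₀, hbd⟩ := hnd
  have hM0 : (0:ℝ) < M := lt_of_lt_of_le one_pos hM1
  -- summability of the series ∑ (k+1)^{-αδ}
  have hsum : Summable (fun k : ℕ => ((k : ℝ) + 1) ^ (-(α * δ))) := by
    have h1 : Summable (fun k : ℕ => (k : ℝ) ^ (-(α * δ))) :=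
      Real.summable_nat_rpow.mpr (by linarith)
    have h2 := (summable_nat_add_iff 1).mpr h1
    simpa using h2
  set T := ∑' k : ℕ, ((k : ℝ) + 1) ^ (-(α * δ)) with hTdef
  have hT0 : 0 ≤ T := tsum_nonneg (fun k => Real.rpow_nonneg (by positivity) _)
  set V := volume (Metric.ball (0 : EuclideanSpace ℝ (Fin n)) 1) with hVdef
  have hVlt : V < ⊤ := measure_ball_lt_top
  set C₁ : ℝ := M * T * 2 ^ ((n : ℝ) - δ) with hC₁def
  set C₂ : ℝ := (2 / ε₀ + 2) ^ n * V.toReal with hC₂def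
  have hC₁0 : 0 ≤ C₁ := by
    have : (0:ℝ) ≤ 2 ^ ((n : ℝ) - δ) := Real.rpow_nonneg (by norm_num) _
    positivity
  have hC₂0 : 0 ≤ C₂ := by
    have : (0:ℝ) ≤ 2 / ε₀ + 2 := by positivity
    have := ENNReal.toReal_nonneg (a := V)
    positivity
  refine ⟨max M (C₁ + C₂), le_trans hM1 (le_max_left _ _), min ε₀ 1, by positivity, ?_⟩
  intro ε hε hεle
  have hεε₀ : ε ≤ ε₀ := le_trans hεle (min_le_left _ _)
  have hε1 : ε ≤ 1 := le_trans hεle (min_le_right _ _)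
  have hεpow0 : 0 ≤ ε ^ ((n : ℝ) - δ) := Real.rpow_nonneg hε.le _
  set F := fractalNest n α S with hFdef
  -- notation for the scaling factors
  set c : ℕ → ℝ := fun k => ((k : ℝ) + 1) ^ (-α) with hcdef
  have hc : ∀ k, 0 < c k := fun k => Real.rpow_pos_of_pos (by positivity) _
  -- Step 1: containment up to thickening 2ε and split into head and tail
  set A : Set ℕ := {k | 2 * ε * ((k : ℝ) + 1) ^ α ≤ ε₀} with hAdef
  have hstep1 : Metric.cthickening ε F ⊆ Metric.thickening (2*ε) F :=
    Metric.cthickening_subset_thickening' (by linarith) (by linarith) F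
  have hstep2 : Metric.thickening (2*ε) F = ⋃ k : ℕ, Metric.thickening (2*ε) (c k • S) := by
    rw [hFdef, fractalNest, Metric.thickening_iUnion]
  set R : ℝ := 2 * ε / ε₀ + 2 * ε with hRdef
  have hR0 : 0 ≤ R := by positivity
  have hsplit : (⋃ k : ℕ, Metric.thickening (2*ε) (c k • S)) ⊆
      (⋃ k ∈ A, Metric.thickening (2*ε) (c k • S)) ∪ Metric.closedBall 0 R := by
    intro x hx
    rw [Set.mem_iUnion] at hx
    obtain ⟨k, hk⟩ := hx
    by_cases hkA : k ∈ A
    · exact Or.inl (Set.mem_biUnion hkA hk)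
    · right
      rw [Metric.mem_thickening_iff] at hk
      obtain ⟨z, hz, hdz⟩ := hk
      obtain ⟨s, hsS, rfl⟩ := hz
      have hks : ‖s‖ = 1 := by
        have := hS hsS
        simpa [Metric.mem_sphere, dist_eq_norm] using this
      have hnz : ‖c k • s‖ = c k := by
        rw [norm_smul, hks, mul_one, Real.norm_eq_abs, abs_of_pos (hc k)]
      have hck : c k ≤ 2 * ε / ε₀ := by
        have hkk : ε₀ < 2 * ε * ((k : ℝ) + 1) ^ α := lt_of_not_ge hkA
        have hbpos : (0:ℝ) < ((k : ℝ) + 1) ^ α := Real.rpow_pos_of_pos (by positivity) _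
        have h1 : ε₀ / (2 * ε) < ((k : ℝ) + 1) ^ α := by
          rw [div_lt_iff₀ (by linarith)]
          linarith [hkk]
        have h2 : (((k : ℝ) + 1) ^ α)⁻¹ < (ε₀ / (2 * ε))⁻¹ :=
          inv_strictAnti₀ (by positivity) h1
        have h3 : (ε₀ / (2 * ε))⁻¹ = 2 * ε / ε₀ := by
          rw [inv_div]
        have h4 : c k = (((k : ℝ) + 1) ^ α)⁻¹ := by
          rw [hcdef]
          exact Real.rpow_neg (by positivity) α
        rw [h4]
        linarith [h2, h3.le, h3.ge]
      rw [Metric.mem_closedBall, dist_eq_norm, sub_zero]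
      have h5 : ‖x‖ ≤ ‖c k • s‖ + dist x (c k • s) := by
        rw [dist_eq_norm]
        have := norm_sub_norm_le x (c k • s)
        linarith [norm_sub_norm_le x (c k • s)]
      rw [hnz] at h5
      rw [hRdef]
      linarith
  -- Step 2: per-copy volume bound for indices in A
  have hterm : ∀ k ∈ A, volume (Metric.thickening (2*ε) (c k • S)) ≤
      ENNReal.ofReal (M * (2*ε) ^ ((n:ℝ) - δ) * ((k : ℝ) + 1) ^ (-(α * δ))) := by
    intro k hkA
    have hb : (0:ℝ) < (k : ℝ) + 1 := by positivity
    set ε' : ℝ := 2 * ε * ((k : ℝ) + 1) ^ α with hε'def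
    have hε'pos : 0 < ε' := by
      have : (0:ℝ) < ((k : ℝ) + 1) ^ α := Real.rpow_pos_of_pos hb _
      positivity
    have hdiv : 2 * ε / c k = ε' := by
      rw [hcdef]
      simp only
      rw [Real.rpow_neg hb.le, div_eq_mul_inv, inv_inv]
    have hsub : Metric.thickening (2*ε) (c k • S) ⊆ c k • Metric.cthickening ε' S := by
      have := thickening_smul_subset n (c k) (2*ε) (hc k) S
      rwa [hdiv] at this
    have hfin : volume (Metric.cthickening ε' S) ≠ ⊤ := by
      have hbded : Bornology.IsBounded (Metric.cthickening ε' S) :=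
        (Metric.isBounded_sphere.subset hS).cthickening
      exact hbded.measure_lt_top.ne
    have hvolS : volume (Metric.cthickening ε' S) ≤
        ENNReal.ofReal (M * ε' ^ ((n:ℝ) - δ)) := by
      rw [ENNReal.le_ofReal_iff_toReal_le hfin (by positivity)]
      exact (hbd ε' hε'pos hkA).2
    calc volume (Metric.thickening (2*ε) (c k • S))
        ≤ volume (c k • Metric.cthickening ε' S) := measure_mono hsub
      _ = ENNReal.ofReal (|c k| ^ n) * volume (Metric.cthickening ε' S) := by
          rw [Measure.addHaar_smul, finrank_euclideanSpace_fin, abs_pow]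
      _ ≤ ENNReal.ofReal (|c k| ^ n) * ENNReal.ofReal (M * ε' ^ ((n:ℝ) - δ)) := by
          exact mul_le_mul_right hvolS _
      _ = ENNReal.ofReal (|c k| ^ n * (M * ε' ^ ((n:ℝ) - δ))) := by
          rw [← ENNReal.ofReal_mul (by positivity)]
      _ = ENNReal.ofReal (M * (2*ε) ^ ((n:ℝ) - δ) * ((k : ℝ) + 1) ^ (-(α * δ))) := by
          congr 1
          have habs : |c k| = c k := abs_of_pos (hc k)
          have hcn : c k ^ n = ((k : ℝ) + 1) ^ (-α * (n:ℝ)) := by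
            rw [hcdef]
            simp only
            rw [← Real.rpow_natCast (((k : ℝ) + 1) ^ (-α)) n, ← Real.rpow_mul hb.le]
          have hε'pow : ε' ^ ((n:ℝ) - δ) =
              (2*ε) ^ ((n:ℝ) - δ) * ((k : ℝ) + 1) ^ (α * ((n:ℝ) - δ)) := by
            rw [hε'def, Real.mul_rpow (by linarith) (Real.rpow_nonneg hb.le _),
              ← Real.rpow_mul hb.le]
          rw [habs, hcn, hε'pow]
          rw [show -α * (n:ℝ) = -(α * δ) + (-(α * ((n:ℝ) - δ))) by ring]
          rw [Real.rpow_add hb, Real.rpow_neg hb.le (α * ((n:ℝ) - δ))]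
          field_simp
  -- Step 3: sum the head
  have hhead : volume (⋃ k ∈ A, Metric.thickening (2*ε) (c k • S)) ≤
      ENNReal.ofReal (C₁ * ε ^ ((n:ℝ) - δ)) := by
    calc volume (⋃ k ∈ A, Metric.thickening (2*ε) (c k • S))
        ≤ ∑' k : A, volume (Metric.thickening (2*ε) (c (k:ℕ) • S)) :=
          measure_biUnion_le volume (Set.to_countable A) _
      _ ≤ ∑' k : A, ENNReal.ofReal
            (M * (2*ε) ^ ((n:ℝ) - δ) * (((k:ℕ) : ℝ) + 1) ^ (-(α * δ))) :=
          ENNReal.tsum_le_tsum (fun k => hterm k k.2)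
      _ ≤ ∑' k : ℕ, ENNReal.ofReal
            (M * (2*ε) ^ ((n:ℝ) - δ) * ((k : ℝ) + 1) ^ (-(α * δ))) :=
          ENNReal.tsum_comp_le_tsum_of_injective Subtype.val_injective _
      _ = ENNReal.ofReal (∑' k : ℕ, M * (2*ε) ^ ((n:ℝ) - δ) * ((k : ℝ) + 1) ^ (-(α * δ))) := by
          rw [ENNReal.ofReal_tsum_of_nonneg]
          · intro k
            have := Real.rpow_nonneg (show (0:ℝ) ≤ (k:ℝ)+1 by positivity) (-(α * δ))
            have h2ε : (0:ℝ) ≤ (2*ε) ^ ((n:ℝ) - δ) := Real.rpow_nonneg (by linarith) _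
            positivity
          · exact hsum.mul_left _
      _ = ENNReal.ofReal (C₁ * ε ^ ((n:ℝ) - δ)) := by
          congr 1
          rw [tsum_mul_left, ← hTdef]
          have h2 : (2*ε) ^ ((n:ℝ) - δ) = 2 ^ ((n:ℝ) - δ) * ε ^ ((n:ℝ) - δ) :=
            Real.mul_rpow (by norm_num) hε.le
          rw [h2, hC₁def]
          ring
  -- Step 4: tail ball bound
  have htail : volume (Metric.closedBall (0 : EuclideanSpace ℝ (Fin n)) R) ≤
      ENNReal.ofReal (C₂ * ε ^ ((n:ℝ) - δ)) := by
    have hball : volume (Metric.closedBall (0 : EuclideanSpace ℝ (Fin n)) R)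
        = ENNReal.ofReal (R ^ n) * V := by
      rw [Measure.addHaar_closedBall _ _ hR0, finrank_euclideanSpace_fin, hVdef]
    have hRn : R ^ n ≤ (2 / ε₀ + 2) ^ n * ε ^ ((n:ℝ) - δ) := by
      have hReq : R = (2 / ε₀ + 2) * ε := by rw [hRdef]; field_simp
      have hεn : ε ^ n ≤ ε ^ ((n:ℝ) - δ) := by
        rw [← Real.rpow_natCast ε n]
        exact Real.rpow_le_rpow_of_exponent_ge hε hε1 (by linarith)
      calc R ^ n = (2 / ε₀ + 2) ^ n * ε ^ n := by rw [hReq, mul_pow]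
        _ ≤ (2 / ε₀ + 2) ^ n * ε ^ ((n:ℝ) - δ) := by
            have : (0:ℝ) ≤ (2 / ε₀ + 2) ^ n := by positivity
            nlinarith [hεn]
    calc volume (Metric.closedBall (0 : EuclideanSpace ℝ (Fin n)) R)
        = ENNReal.ofReal (R ^ n) * V := hball
      _ ≤ ENNReal.ofReal ((2 / ε₀ + 2) ^ n * ε ^ ((n:ℝ) - δ)) * V :=
          mul_le_mul_left (ENNReal.ofReal_le_ofReal hRn) _
      _ = ENNReal.ofReal ((2 / ε₀ + 2) ^ n * ε ^ ((n:ℝ) - δ)) * ENNReal.ofReal V.toReal := by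
          rw [ENNReal.ofReal_toReal hVlt.ne]
      _ = ENNReal.ofReal ((2 / ε₀ + 2) ^ n * ε ^ ((n:ℝ) - δ) * V.toReal) := by
          rw [← ENNReal.ofReal_mul (by positivity)]
      _ = ENNReal.ofReal (C₂ * ε ^ ((n:ℝ) - δ)) := by rw [hC₂def]; ring_nf
  -- Combine into the ENNReal upper bound
  have hupper : volume (Metric.cthickening ε F) ≤
      ENNReal.ofReal ((C₁ + C₂) * ε ^ ((n:ℝ) - δ)) := by
    calc volume (Metric.cthickening ε F)
        ≤ volume ((⋃ k ∈ A, Metric.thickening (2*ε) (c k • S)) ∪ Metric.closedBall 0 R) := by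
          apply measure_mono
          exact (hstep1.trans (hstep2 ▸ hsplit))
      _ ≤ volume (⋃ k ∈ A, Metric.thickening (2*ε) (c k • S)) +
            volume (Metric.closedBall (0 : EuclideanSpace ℝ (Fin n)) R) :=
          measure_union_le _ _
      _ ≤ ENNReal.ofReal (C₁ * ε ^ ((n:ℝ) - δ)) + ENNReal.ofReal (C₂ * ε ^ ((n:ℝ) - δ)) :=
          add_le_add hhead htail
      _ = ENNReal.ofReal ((C₁ + C₂) * ε ^ ((n:ℝ) - δ)) := by
          rw [← ENNReal.ofReal_add (by positivity) (by positivity)]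
          ring_nf
  have hne : volume (Metric.cthickening ε F) ≠ ⊤ :=
    (lt_of_le_of_lt hupper ENNReal.ofReal_lt_top).ne
  constructor
  · -- lower bound
    have hSF : S ⊆ F := by
      intro x hx
      rw [hFdef, fractalNest, Set.mem_iUnion]
      refine ⟨0, ?_⟩
      have h1 : (((0:ℕ) : ℝ) + 1) ^ (-α) = (1:ℝ) := by norm_num
      rw [h1, one_smul]
      exact hx
    have hmono : (volume (Metric.cthickening ε S)).toReal ≤
        (volume (Metric.cthickening ε F)).toReal :=
      ENNReal.toReal_mono hne (measure_mono (Metric.cthickening_subset_of_subset ε hSF))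
    have hlow := (hbd ε hε hεε₀).1
    have hMinv : (max M (C₁ + C₂))⁻¹ ≤ M⁻¹ :=
      inv_anti₀ hM0 (le_max_left _ _)
    calc (max M (C₁ + C₂))⁻¹ * ε ^ ((n:ℝ) - δ)
        ≤ M⁻¹ * ε ^ ((n:ℝ) - δ) := mul_le_mul_of_nonneg_right hMinv hεpow0
      _ ≤ (volume (Metric.cthickening ε S)).toReal := hlow
      _ ≤ (volume (Metric.cthickening ε F)).toReal := hmono
  · -- upper bound
    have h1 : (volume (Metric.cthickening ε F)).toReal ≤ (C₁ + C₂) * ε ^ ((n:ℝ) - δ) :=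
      ENNReal.toReal_le_of_le_ofReal (by positivity) hupper
    calc (volume (Metric.cthickening ε F)).toReal
        ≤ (C₁ + C₂) * ε ^ ((n:ℝ) - δ) := h1
      _ ≤ max M (C₁ + C₂) * ε ^ ((n:ℝ) - δ) :=
          mul_le_mul_of_nonneg_right (le_max_right _ _) hεpow0
end
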